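/- arXiv:1406.3215 — 8 statements merged into one kernel-verified Lean document; each statement's English description precedes it below -/
import Mathlib

section
/- Let p ∈ [1,∞] and p' ∈ [p,∞]. Every uniformly p-convex metric space is uniformly p'-convex. -/
open Filter Topology Metric Set MeasureTheory
open scoped ENNReal

section Defs

variable (X : Type) [MetricSpace X]

/-- `m` is a midpoint of `x` and `y`. -/
def IsMidpoint {X : Type} [MetricSpace X] (x y m : X) : Prop :=
  dist x m = dist x y / 2 ∧ dist y m = dist x y / 2

/-- `(X,d)` admits midpoints. -/
def AdmitsMidpoints : Prop := ∀ x y : X, ∃ m, IsMidpoint x y m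

/-- The `p`-mean of two nonnegative reals, `p ∈ [1,∞]`. -/
noncomputable def pMean (p : ℝ≥0∞) (a b : ℝ) : ℝ :=
  if p = ∞ then max a b else ((a ^ p.toReal + b ^ p.toReal) / 2) ^ (1 / p.toReal)

/-- `p`-convexity. -/
def PConvex (p : ℝ≥0∞) : Prop :=
  AdmitsMidpoints X ∧ ∀ x y z m : X, IsMidpoint x y m →
    dist m z ≤ pMean p (dist x z) (dist y z)

/-- strict `p`-convexity. -/
def StrictlyPConvex (p : ℝ≥0∞) : Prop :=
  AdmitsMidpoints X ∧ ∀ x y z m : X, IsMidpoint x y m →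
    (if p = 1 then |dist x z - dist y z| < dist x y else x ≠ y) →
    dist m z < pMean p (dist x z) (dist y z)

/-- uniform `p`-convexity. -/
def UniformlyPConvex (p : ℝ≥0∞) : Prop :=
  AdmitsMidpoints X ∧ ∀ ε : ℝ, 0 < ε → ∃ ρ : ℝ, ρ ∈ Set.Ioo (0:ℝ) 1 ∧
    ∀ x y z m : X, IsMidpoint x y m →
      (if p = 1 then |dist x z - dist y z| + ε * pMean 1 (dist x z) (dist y z) < dist x y
        else ε * pMean p (dist x z) (dist y z) < dist x y) →
      dist m z ≤ (1 - ρ) * pMean p (dist x z) (dist y z)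

/-- Busemann non-positive curvature condition. -/
def Busemann : Prop :=
  AdmitsMidpoints X ∧ ∀ x₀ x₁ y₀ y₁ xm ym : X,
    IsMidpoint x₀ x₁ xm → IsMidpoint y₀ y₁ ym →
      dist xm ym ≤ (dist x₀ y₀ + dist x₁ y₁) / 2

/-- `γ` (restricted to `[0,1]`) is a geodesic from `x` to `y`. -/
def IsGeodesic {X : Type} [MetricSpace X] (γ : ℝ → X) (x y : X) : Prop :=
  γ 0 = x ∧ γ 1 = y ∧ ∀ s ∈ Set.Icc (0:ℝ) 1, ∀ t ∈ Set.Icc (0:ℝ) 1,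
    dist (γ s) (γ t) = |s - t| * dist x y

/-- A subset is (geodesically) convex if it contains all geodesics between its points. -/
def GConvex {X : Type} [MetricSpace X] (C : Set X) : Prop :=
  ∀ x ∈ C, ∀ y ∈ C, ∀ γ : ℝ → X, IsGeodesic γ x y → ∀ t ∈ Set.Icc (0:ℝ) 1, γ t ∈ C

/-- The convex hull: the smallest convex set containing `A`. -/
def gConvexHull {X : Type} [MetricSpace X] (A : Set X) : Set X :=
  ⋂₀ {C : Set X | GConvex C ∧ A ⊆ C}

/-- `∞`-convexity. -/
def InftyConvex : Prop :=
  AdmitsMidpoints X ∧ ∀ x y z m : X, IsMidpoint x y m →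
    dist m z ≤ max (dist x z) (dist y z)

/-- strict `∞`-convexity. -/
def StrictlyInftyConvex : Prop :=
  AdmitsMidpoints X ∧ ∀ x y z m : X, IsMidpoint x y m → x ≠ y →
    dist m z < max (dist x z) (dist y z)

/-- uniform `∞`-convexity. -/
def UniformlyInftyConvex : Prop :=
  AdmitsMidpoints X ∧ ∀ ε : ℝ, 0 < ε → ∃ ρ : ℝ, ρ ∈ Set.Ioo (0:ℝ) 1 ∧
    ∀ x y z m : X, IsMidpoint x y m →
      ε * max (dist x z) (dist y z) < dist x y →
      dist m z ≤ (1 - ρ) * max (dist x z) (dist y z)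

/-- `ρ` works as a modulus of nearly uniform convexity for the parameters `ε`, `R`:
for every infinite `ε`-separated family in a ball of radius `r ≤ R` around `y`, the ball
`B_{(1-ρ)r}(y)` intersects the closed convex hull of the family. -/
def NUCModulus (ε R ρ : ℝ) : Prop :=
  ∀ (ι : Type) [Infinite ι], ∀ (x : ι → X) (y : X) (r : ℝ), r ≤ R →
    (∀ i j : ι, i ≠ j → ε ≤ dist (x i) (x j)) → (∀ i, dist (x i) y ≤ r) →
    (Metric.closedBall y ((1 - ρ) * r) ∩ closure (gConvexHull (Set.range x))).Nonempty

/-- Nearly uniform convexity. -/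
def NearlyUniformlyConvex : Prop :=
  InftyConvex X ∧ ∀ R : ℝ, 0 < R → ∀ ε : ℝ, 0 < ε → ∃ ρ : ℝ, 0 < ρ ∧ NUCModulus X ε R ρ

/-- Reflexivity: every decreasing directed family of nonempty bounded closed convex sets
has nonempty intersection. -/
def MetricReflexive : Prop :=
  ∀ (I : Type) [Nonempty I] [Preorder I] [IsDirected I (· ≤ ·)], ∀ C : I → Set X,
    (∀ i, (C i).Nonempty) → (∀ i, Bornology.IsBounded (C i)) → (∀ i, IsClosed (C i)) →
    (∀ i, GConvex (C i)) → (∀ i j : I, j ≤ i → C i ⊆ C j) → (⋂ i, C i).Nonempty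

/-- The co-convex topology: the weakest topology containing all complements of closed
convex sets. -/
def coConvexTopology : TopologicalSpace X :=
  TopologicalSpace.generateFrom {U : Set X | ∃ C : Set X, IsClosed C ∧ GConvex C ∧ U = Cᶜ}

/-- The set of limit points of the sequence `x` in the co-convex topology. -/
def coLim {X : Type} [MetricSpace X] (x : ℕ → X) : Set X :=
  {a : X | Filter.Tendsto x Filter.atTop (@nhds X (coConvexTopology X) a)}

/-- Countable reflexivity. -/
def CountableReflexive : Prop :=
  MetricReflexive X ∧ ∀ x : ℕ → X, (coLim x).Nonempty →
    ∃ φ : ℕ → ℕ, StrictMono φ ∧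
      coLim x = ⋂ m : ℕ, closure (gConvexHull ((fun n => x (φ n)) '' Set.Ici m))

/-- Quasi-convexity: all sublevel sets are convex. -/
def GQuasiConvex {X : Type} [MetricSpace X] (f : X → ℝ) : Prop :=
  ∀ c : ℝ, GConvex {x : X | f x ≤ c}

/-- Quasi-monotonicity: both quasi-convex and quasi-concave. -/
def GQuasiMonotone {X : Type} [MetricSpace X] (f : X → ℝ) : Prop :=
  GQuasiConvex f ∧ GQuasiConvex (fun x => -f x)

/-- The `p`-mean for real `p ∈ [1,∞)`. -/
noncomputable def pMeanR (p a b : ℝ) : ℝ := ((a ^ p + b ^ p) / 2) ^ (1 / p)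

/-- `p`-convexity for real `p`. -/
def PConvexR (p : ℝ) : Prop :=
  AdmitsMidpoints X ∧ ∀ x y z m : X, IsMidpoint x y m →
    dist m z ≤ pMeanR p (dist x z) (dist y z)

/-- strict `p`-convexity for real `p`. -/
def StrictlyPConvexR (p : ℝ) : Prop :=
  AdmitsMidpoints X ∧ ∀ x y z m : X, IsMidpoint x y m →
    (if p = 1 then |dist x z - dist y z| < dist x y else x ≠ y) →
    dist m z < pMeanR p (dist x z) (dist y z)

/-- uniform `p`-convexity for real `p`. -/
def UniformlyPConvexR (p : ℝ) : Prop :=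
  AdmitsMidpoints X ∧ ∀ ε : ℝ, 0 < ε → ∃ ρ : ℝ, ρ ∈ Set.Ioo (0:ℝ) 1 ∧
    ∀ x y z m : X, IsMidpoint x y m →
      ε * pMeanR p (dist x z) (dist y z) < dist x y →
      dist m z ≤ (1 - ρ) * pMeanR p (dist x z) (dist y z)

/-- `ω(z,(x_n)) = limsup_n d(z,x_n)`. -/
noncomputable def asymRadius {X : Type} [MetricSpace X] (x : ℕ → X) (z : X) : ℝ :=
  Filter.limsup (fun n => dist z (x n)) Filter.atTop

/-- `a` is the (unique) asymptotic center of the sequence `x`. -/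
def IsAsymptoticCenter {X : Type} [MetricSpace X] (x : ℕ → X) (a : X) : Prop :=
  (∀ z : X, asymRadius x a ≤ asymRadius x z) ∧
  ∀ b : X, (∀ z : X, asymRadius x b ≤ asymRadius x z) → b = a

/-- Weak sequential convergence: `a` is the asymptotic center of every subsequence. -/
def WeakSeqConv {X : Type} [MetricSpace X] (x : ℕ → X) (a : X) : Prop :=
  ∀ φ : ℕ → ℕ, StrictMono φ → IsAsymptoticCenter (fun n => x (φ n)) a

end Defs

/-! For `p > 1` the power mean `M^p` is nondecreasing in `p`, so both the hypothesis and the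
conclusion of uniform `p`-convexity pass to `p'`. For `p = 1 < p'`, split according to the size of
`|d(x,z) - d(y,z)|` relative to `M^{p'}`. If it is small, uniform `1`-convexity applies with
`ε / 2`, and `M^1 ≤ M^{p'}`. If it is large, compactness of the normalized pairs gives
`M^1 ≤ (1 - c) M^{p'}` for some `c > 0`, and `d(m,z) ≤ M^1` by `1`-convexity. -/

lemma pMean_top (a b : ℝ) : pMean ∞ a b = max a b := if_pos rfl

lemma pMean_of_ne_top {p : ℝ≥0∞} (hp : p ≠ ∞) (a b : ℝ) :
    pMean p a b = ((a ^ p.toReal + b ^ p.toReal) / 2) ^ (1 / p.toReal) := if_neg hp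

lemma pMean_one (a b : ℝ) : pMean 1 a b = (a + b) / 2 := by
  simp [pMean_of_ne_top]

lemma continuous_pMean (p : ℝ≥0∞) : Continuous fun v : ℝ × ℝ => pMean p v.1 v.2 := by
  unfold pMean
  split_ifs
  · fun_prop
  · have hq := p.toReal_nonneg
    exact (Real.continuous_rpow_const (by positivity)).comp
      ((((Real.continuous_rpow_const hq).comp continuous_fst).add
        ((Real.continuous_rpow_const hq).comp continuous_snd)).div_const 2)

lemma pMean_mul {p : ℝ≥0∞} (hp : p ≠ 0) {t a b : ℝ} (ht : 0 ≤ t) (ha : 0 ≤ a) (hb : 0 ≤ b) :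
    pMean p (t * a) (t * b) = t * pMean p a b := by
  by_cases hpt : p = ∞
  · simp only [hpt, pMean_top, mul_max_of_nonneg _ _ ht]
  have hq : p.toReal ≠ 0 := ENNReal.toReal_ne_zero.2 ⟨hp, hpt⟩
  rw [pMean_of_ne_top hpt, pMean_of_ne_top hpt, Real.mul_rpow ht ha, Real.mul_rpow ht hb,
    ← mul_add, mul_div_assoc, Real.mul_rpow (by positivity) (by positivity), one_div,
    Real.rpow_rpow_inv ht hq]

lemma Real.add_div_two_rpow_le {r u v : ℝ} (hr : 1 ≤ r) (hu : 0 ≤ u) (hv : 0 ≤ v) :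
    ((u + v) / 2) ^ r ≤ (u ^ r + v ^ r) / 2 := by
  have := (convexOn_rpow hr).2 hu hv (by norm_num : (0 : ℝ) ≤ 1 / 2)
    (by norm_num : (0 : ℝ) ≤ 1 / 2) (by norm_num)
  simp only [smul_eq_mul] at this
  rwa [show (u + v) / 2 = 1 / 2 * u + 1 / 2 * v by ring,
    show (u ^ r + v ^ r) / 2 = 1 / 2 * u ^ r + 1 / 2 * v ^ r by ring]

lemma Real.add_div_two_rpow_lt {r u v : ℝ} (hr : 1 < r) (hu : 0 ≤ u) (hv : 0 ≤ v) (huv : u ≠ v) :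
    ((u + v) / 2) ^ r < (u ^ r + v ^ r) / 2 := by
  have := (strictConvexOn_rpow hr).2 hu hv huv (by norm_num : (0 : ℝ) < 1 / 2)
    (by norm_num : (0 : ℝ) < 1 / 2) (by norm_num)
  simp only [smul_eq_mul] at this
  rwa [show (u + v) / 2 = 1 / 2 * u + 1 / 2 * v by ring,
    show (u ^ r + v ^ r) / 2 = 1 / 2 * u ^ r + 1 / 2 * v ^ r by ring]

lemma pMean_le_max {p : ℝ≥0∞} (hp : p ≠ 0) {a b : ℝ} (ha : 0 ≤ a) (hb : 0 ≤ b) :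
    pMean p a b ≤ max a b := by
  by_cases hpt : p = ∞
  · rw [hpt, pMean_top]
  have hq : 0 < p.toReal := ENNReal.toReal_pos hp hpt
  have hmax : 0 ≤ max a b := le_max_of_le_left ha
  rw [pMean_of_ne_top hpt, one_div, Real.rpow_inv_le_iff_of_pos (by positivity) hmax hq]
  have := Real.rpow_le_rpow ha (le_max_left a b) hq.le
  have := Real.rpow_le_rpow hb (le_max_right a b) hq.le
  linarith

lemma pMean_mono {p p' : ℝ≥0∞} (hp : 1 ≤ p) (hpp' : p ≤ p') {a b : ℝ} (ha : 0 ≤ a)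
    (hb : 0 ≤ b) : pMean p a b ≤ pMean p' a b := by
  by_cases hp't : p' = ∞
  · exact hp't ▸ pMean_top a b ▸ pMean_le_max (one_pos.trans_le hp).ne' ha hb
  have hpt : p ≠ ∞ := ne_top_of_le_ne_top hp't hpp'
  set q := p.toReal
  set q' := p'.toReal
  have hq : 1 ≤ q := by simpa using ENNReal.toReal_mono hpt hp
  have hqq' : q ≤ q' := ENNReal.toReal_mono hp't hpp'
  have hq0 : 0 < q := one_pos.trans_le hq
  have hq'0 : 0 < q' := hq0.trans_le hqq'
  have hpow : ∀ c : ℝ, 0 ≤ c → (c ^ q) ^ (q' / q) = c ^ q' := fun c hc => by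
    rw [← Real.rpow_mul hc, mul_div_cancel₀ _ hq0.ne']
  rw [pMean_of_ne_top hpt, pMean_of_ne_top hp't, one_div, one_div,
    Real.le_rpow_inv_iff_of_pos (by positivity) (by positivity) hq'0, ← Real.rpow_mul
    (by positivity), ← hpow a ha, ← hpow b hb, inv_mul_eq_div]
  exact Real.add_div_two_rpow_le ((one_le_div hq0).2 hqq') (by positivity) (by positivity)

lemma pMean_one_lt {p : ℝ≥0∞} (hp : 1 < p) {a b : ℝ} (ha : 0 ≤ a) (hb : 0 ≤ b) (hab : a ≠ b) :
    pMean 1 a b < pMean p a b := by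
  rw [pMean_one]
  by_cases hpt : p = ∞
  · rw [hpt, pMean_top]
    rcases hab.lt_or_gt with h | h
    · rw [max_eq_right h.le]; linarith
    · rw [max_eq_left h.le]; linarith
  have hq : 1 < p.toReal := by simpa using (ENNReal.toReal_lt_toReal ENNReal.one_ne_top hpt).2 hp
  rw [pMean_of_ne_top hpt, one_div,
    Real.lt_rpow_inv_iff_of_pos (by positivity) (by positivity) (one_pos.trans hq)]
  exact Real.add_div_two_rpow_lt hq ha hb hab

lemma exists_pMean_one_le_one_sub_mul {p : ℝ≥0∞} (hp : 1 < p) {θ : ℝ} (hθ : 0 < θ) :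
    ∃ c > 0, ∀ a b : ℝ, 0 ≤ a → 0 ≤ b → θ * pMean p a b ≤ |a - b| →
      pMean 1 a b ≤ (1 - c) * pMean p a b := by
  have hp0 : p ≠ 0 := (zero_lt_one.trans hp).ne'
  -- By homogeneity it suffices to bound `M^p - M^1` from below on the compact set of
  -- normalized pairs with `M^p = 1`, where it is positive.
  let K : Set (ℝ × ℝ) := {v | 0 ≤ v.1 ∧ 0 ≤ v.2 ∧ pMean p v.1 v.2 = 1 ∧ θ ≤ |v.1 - v.2|}
  have hK : IsCompact K := by
    refine (isCompact_Icc (a := ((0 : ℝ), (0 : ℝ))) (b := (2, 2))).of_isClosed_subset ?_ ?_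
    · exact (isClosed_le continuous_const continuous_fst).inter
        ((isClosed_le continuous_const continuous_snd).inter
        ((isClosed_eq (continuous_pMean p) continuous_const).inter
        (isClosed_le continuous_const (continuous_fst.sub continuous_snd).abs)))
    · rintro ⟨a, b⟩ ⟨ha, hb, hM, -⟩
      have := pMean_mono le_rfl hp.le ha hb
      rw [pMean_one, hM] at this
      exact ⟨⟨ha, hb⟩, by simp only [Prod.mk_le_mk]; constructor <;> linarith⟩
  have hgap : ∀ v ∈ K, 0 < pMean p v.1 v.2 - pMean 1 v.1 v.2 := by
    rintro ⟨a, b⟩ ⟨ha, hb, -, hθv⟩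
    refine sub_pos.2 (pMean_one_lt hp ha hb fun h => ?_)
    rw [h, sub_self, abs_zero] at hθv
    linarith
  obtain ⟨c, hc, hcK⟩ := hK.exists_forall_le'
    ((continuous_pMean p).sub (continuous_pMean 1)).continuousOn hgap
  refine ⟨c, hc, fun a b ha hb hab => ?_⟩
  have hAM := pMean_mono le_rfl hp.le ha hb
  have hA : 0 ≤ pMean 1 a b := by rw [pMean_one]; positivity
  rcases (hA.trans hAM).eq_or_lt with hM | hM
  · rw [← hM] at hAM ⊢
    simpa using hAM
  have hM' : 0 ≤ (pMean p a b)⁻¹ := inv_nonneg.2 hM.le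
  have hv : ((pMean p a b)⁻¹ * a, (pMean p a b)⁻¹ * b) ∈ K := by
    refine ⟨by positivity, by positivity, ?_, ?_⟩
    · rw [pMean_mul hp0 hM' ha hb, inv_mul_cancel₀ hM.ne']
    · rw [← mul_sub, abs_mul, abs_of_pos (inv_pos.2 hM), le_inv_mul_iff₀ hM]
      linarith
  have hcM : c ≤ (pMean p a b - pMean 1 a b) / pMean p a b := by
    have := hcK _ hv
    rwa [Pi.sub_apply, pMean_mul hp0 hM' ha hb, pMean_mul one_ne_zero hM' ha hb, ← mul_sub,
      inv_mul_eq_div] at this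
  rw [le_div_iff₀ hM] at hcM
  linarith

namespace UniformlyPConvex

variable {X : Type} [MetricSpace X]

theorem pConvex_one (h : UniformlyPConvex X 1) : PConvex X 1 := by
  refine ⟨h.1, fun x y z m hm => ?_⟩
  obtain ⟨hxm, hym⟩ := hm
  rw [pMean_one]
  have hxz := dist_triangle_left m z x
  have hyz := dist_triangle_left m z y
  have hxy := dist_triangle_right x y z
  -- If `d(x,y) ≤ |d(x,z) - d(y,z)|`, the triangle inequality through the endpoint nearer to `z`
  -- suffices; otherwise the uniform condition applies for a suitable `ε`.
  rcases le_or_gt (dist x y) |dist x z - dist y z| with hd | hd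
  · rcases le_total (dist x z) (dist y z) with hab | hab
    · rw [abs_of_nonpos (by linarith)] at hd
      linarith
    · rw [abs_of_nonneg (by linarith)] at hd
      linarith
  have hsum : 0 < dist x z + dist y z := by linarith [abs_nonneg (dist x z - dist y z)]
  obtain ⟨ρ, hρ, hρ'⟩ := h.2 _ (div_pos (sub_pos.2 hd) hsum)
  have hcond : |dist x z - dist y z| + (dist x y - |dist x z - dist y z|) / (dist x z + dist y z)
      * pMean 1 (dist x z) (dist y z) < dist x y := by
    rw [pMean_one, div_mul_div_comm, mul_comm _ (2 : ℝ), mul_div_mul_right _ _ hsum.ne']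
    linarith
  have := hρ' x y z m ⟨hxm, hym⟩ (if_pos rfl ▸ hcond)
  rw [pMean_one] at this
  nlinarith [hρ.1]

theorem mono {p p' : ℝ≥0∞} (h : UniformlyPConvex X p) (hp : 1 < p) (hpp' : p ≤ p') :
    UniformlyPConvex X p' := by
  refine ⟨h.1, fun ε hε => ?_⟩
  obtain ⟨ρ, hρ, hρ'⟩ := h.2 ε hε
  refine ⟨ρ, hρ, fun x y z m hm hxy => ?_⟩
  rw [if_neg (hp.trans_le hpp').ne'] at hxy
  have hle : pMean p (dist x z) (dist y z) ≤ pMean p' (dist x z) (dist y z) :=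
    pMean_mono hp.le hpp' dist_nonneg dist_nonneg
  calc dist m z ≤ (1 - ρ) * pMean p (dist x z) (dist y z) := hρ' x y z m hm <| by
        rw [if_neg hp.ne']
        exact (mul_le_mul_of_nonneg_left hle hε.le).trans_lt hxy
    _ ≤ (1 - ρ) * pMean p' (dist x z) (dist y z) := by
        gcongr
        linarith [hρ.2]

theorem of_one {p : ℝ≥0∞} (h : UniformlyPConvex X 1) (hp : 1 < p) : UniformlyPConvex X p := by
  refine ⟨h.1, fun ε hε => ?_⟩
  obtain ⟨c, hc, hgap⟩ := exists_pMean_one_le_one_sub_mul hp (θ := ε / 4) (by positivity)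
  obtain ⟨ρ, hρ, hρ'⟩ := h.2 (ε / 2) (by positivity)
  refine ⟨min ρ c, ⟨lt_min hρ.1 hc, (min_le_left _ _).trans_lt hρ.2⟩, fun x y z m hm hxy => ?_⟩
  rw [if_neg hp.ne'] at hxy
  have hAM : pMean 1 (dist x z) (dist y z) ≤ pMean p (dist x z) (dist y z) :=
    pMean_mono le_rfl hp.le dist_nonneg dist_nonneg
  have hA : 0 ≤ pMean 1 (dist x z) (dist y z) := by rw [pMean_one]; positivity
  rcases le_or_gt (ε / 4 * pMean p (dist x z) (dist y z)) |dist x z - dist y z| with hfar | hnear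
  · calc dist m z ≤ pMean 1 (dist x z) (dist y z) := h.pConvex_one.2 x y z m hm
      _ ≤ (1 - c) * pMean p (dist x z) (dist y z) := hgap _ _ dist_nonneg dist_nonneg hfar
      _ ≤ (1 - min ρ c) * pMean p (dist x z) (dist y z) := by
          gcongr
          · exact hA.trans hAM
          · exact min_le_right _ _
  · have hcond : |dist x z - dist y z| + ε / 2 * pMean 1 (dist x z) (dist y z) < dist x y := by
      have := mul_le_mul_of_nonneg_left hAM (by positivity : (0 : ℝ) ≤ ε / 2)
      have := mul_nonneg hε.le (hA.trans hAM)
      linarith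
    calc dist m z ≤ (1 - ρ) * pMean 1 (dist x z) (dist y z) := hρ' x y z m hm (if_pos rfl ▸ hcond)
      _ ≤ (1 - min ρ c) * pMean p (dist x z) (dist y z) := by
          gcongr
          · linarith [hρ.2, min_le_left ρ c]
          · exact min_le_left _ _

end UniformlyPConvex

/-- For `1 ≤ p ≤ p'`, every uniformly `p`-convex metric space is uniformly
`p'`-convex. -/
theorem uniformly_pConvex_mono (X : Type) [MetricSpace X] (p p' : ℝ≥0∞)
    (hp : 1 ≤ p) (hpp' : p ≤ p') (h : UniformlyPConvex X p) :
    UniformlyPConvex X p' := by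
  rcases hp.eq_or_lt with rfl | hp
  · rcases hpp'.eq_or_lt with rfl | hp'
    · exact h
    · exact h.of_one hp'
  · exact h.mono hp hpp'
end

section
/- Let (X,d) be a complete nearly uniformly convex metric space and C ⊆ X a nonempty closed convex subset. Then for every x ∈ X the set P_C(x) = {c ∈ C : d(x,c) = inf_{c' ∈ C} d(x,c')} is nonempty and compact. -/
open Filter Topology Metric Set MeasureTheory
open scoped ENNReal

/-- If a set admits no infinite `ε`-separated sequence, it is covered by finitely many
closed `ε`-balls. -/
lemma exists_finite_cover_of_no_sep {X : Type} [MetricSpace X] (A : Set X) (ε : ℝ)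
    (h : ∀ u : ℕ → X, (∀ n, u n ∈ A) → (∀ i j : ℕ, i ≠ j → ε ≤ dist (u i) (u j)) → False) :
    ∃ F : Finset X, A ⊆ ⋃ p ∈ F, Metric.closedBall p ε := by
  classical
  by_contra hc
  push_neg at hc
  have hg : ∀ F : Finset X, ∃ a, a ∈ A ∧ ∀ p ∈ F, ε < dist a p := by
    intro F
    obtain ⟨a, haA, haF⟩ := Set.not_subset.mp (hc F)
    refine ⟨a, haA, fun p hp => ?_⟩
    by_contra hle
    push_neg at hle
    exact haF (Set.mem_biUnion hp (Metric.mem_closedBall.mpr hle))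
  choose g hgA hgd using hg
  let F : ℕ → Finset X := fun n => Nat.rec ∅ (fun _ Fk => insert (g Fk) Fk) n
  have hF : ∀ n, F (n + 1) = insert (g (F n)) (F n) := fun n => rfl
  have hmono : ∀ m n, m ≤ n → F m ⊆ F n := by
    intro m n hmn
    induction n with
    | zero => simp [Nat.le_zero.mp hmn]
    | succ k ih =>
      rcases Nat.lt_or_ge m (k + 1) with hm | hm
      · exact (ih (Nat.lt_succ_iff.mp hm)).trans (by rw [hF]; exact Finset.subset_insert _ _)
      · have : m = k + 1 := le_antisymm hmn hm
        subst this; exact Finset.Subset.refl _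
  set u : ℕ → X := fun n => g (F n) with hu
  have hmem : ∀ m n, m < n → u m ∈ F n := by
    intro m n hmn
    have : u m ∈ F (m + 1) := by rw [hF]; exact Finset.mem_insert_self _ _
    exact hmono _ _ hmn this
  refine h u (fun n => hgA _) ?_
  intro i j hij
  rcases Ne.lt_or_gt hij with hlt | hlt
  · have := hgd (F j) (u i) (hmem _ _ hlt)
    rw [dist_comm] at this; exact this.le
  · exact (hgd (F i) (u j) (hmem _ _ hlt)).le

/-- In a complete nearly uniformly convex space, the metric projection onto a
nonempty closed convex set has nonempty compact images. -/
theorem projection_nonempty_compact (X : Type) [MetricSpace X] [CompleteSpace X]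
    (h : NearlyUniformlyConvex X) (C : Set X) (hne : C.Nonempty) (hcl : IsClosed C)
    (hconv : GConvex C) (x : X) :
    ({c ∈ C | dist x c = Metric.infDist x C}).Nonempty ∧
      IsCompact {c ∈ C | dist x c = Metric.infDist x C} := by
  set δ := Metric.infDist x C with hδdef
  have hδ0 : 0 ≤ δ := Metric.infDist_nonneg
  rcases eq_or_lt_of_le hδ0 with hδz | hδpos
  · -- δ = 0 : x ∈ C and the projection is {x}
    have hx : x ∈ C := by
      rw [← hcl.closure_eq]
      exact (Metric.mem_closure_iff_infDist_zero hne).mpr hδz.symm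
    have hPx : {c ∈ C | dist x c = δ} = {x} := by
      ext c
      constructor
      · rintro ⟨-, hd⟩
        have : dist x c = 0 := by rw [hd, ← hδz]
        exact Set.mem_singleton_iff.mpr (dist_eq_zero.mp this).symm
      · rintro rfl
        exact ⟨hx, by simp [← hδz]⟩
    rw [hPx]
    exact ⟨Set.singleton_nonempty _, isCompact_singleton⟩
  · -- δ > 0
    -- key covering lemma near the optimum
    have key : ∀ ε : ℝ, 0 < ε → ∃ η : ℝ, 0 < η ∧ ∃ F : Finset X,
        {c ∈ C | dist x c ≤ δ + η} ⊆ ⋃ p ∈ F, Metric.closedBall p ε := by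
      intro ε hε
      obtain ⟨ρ, hρ, hmod⟩ := h.2 (δ + 1) (by linarith) ε hε
      set η := min (ρ * δ / 2) 1 with hηdef
      have hηpos : 0 < η := lt_min (by positivity) one_pos
      have hη1 : η ≤ 1 := min_le_right _ _
      have hηρ : η < ρ * δ := (min_le_left _ _).trans_lt (by linarith [mul_pos hρ hδpos])
      refine ⟨η, hηpos, ?_⟩
      apply exists_finite_cover_of_no_sep
      intro u hu hsep
      obtain ⟨z, hz1, hz2⟩ := hmod ℕ u x (δ + η) (by linarith)
        (fun i j hij => hsep i j hij)
        (fun i => by rw [dist_comm]; exact (hu i).2)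
      have hhull : gConvexHull (Set.range u) ⊆ C := by
        apply Set.sInter_subset_of_mem
        refine ⟨hconv, ?_⟩
        rintro _ ⟨n, rfl⟩
        exact (hu n).1
      have hzC : z ∈ C := (closure_minimal hhull hcl) hz2
      have h1 : δ ≤ dist x z := Metric.infDist_le_dist_of_mem hzC
      have h2 : dist z x ≤ (1 - ρ) * (δ + η) := Metric.mem_closedBall.mp hz1
      rw [dist_comm] at h2
      nlinarith [mul_pos hρ hηpos]
    constructor
    · -- nonemptiness via an ultrafilter on the near-optimal sets
      set S : {η : ℝ // 0 < η} → Set X := fun η => {c ∈ C | dist x c ≤ δ + η.1} with hSdef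
      have hSne : ∀ η, (S η).Nonempty := by
        rintro ⟨η, hη⟩
        obtain ⟨c, hcC, hcd⟩ := (Metric.infDist_lt_iff hne).mp
          (by rw [← hδdef]; linarith : Metric.infDist x C < δ + η)
        exact ⟨c, hcC, hcd.le⟩
      have hSclosed : ∀ η, IsClosed (S η) := by
        intro η
        have : S η = C ∩ {c | dist x c ≤ δ + η.1} := rfl
        rw [this]
        exact hcl.inter (isClosed_le (continuous_const.dist continuous_id) continuous_const)
      haveI : Nonempty {η : ℝ // 0 < η} := ⟨⟨1, one_pos⟩⟩
      have hdir : Directed (· ≥ ·) (fun η => (Filter.principal (S η))) := by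
        rintro ⟨η₁, hη₁⟩ ⟨η₂, hη₂⟩
        refine ⟨⟨min η₁ η₂, lt_min hη₁ hη₂⟩, ?_, ?_⟩
        · apply Filter.principal_mono.mpr
          rintro c ⟨hcC, hcd⟩
          exact ⟨hcC, hcd.trans (by simp [min_le_left])⟩
        · apply Filter.principal_mono.mpr
          rintro c ⟨hcC, hcd⟩
          exact ⟨hcC, hcd.trans (by simp [min_le_right])⟩
      haveI hFne : Filter.NeBot (⨅ η, Filter.principal (S η)) :=
        Filter.iInf_neBot_of_directed' hdir
          (fun η => Filter.principal_neBot_iff.mpr (hSne η))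
      set U := Ultrafilter.of (⨅ η, Filter.principal (S η)) with hUdef
      have hUle : (U : Filter X) ≤ ⨅ η, Filter.principal (S η) := Ultrafilter.of_le _
      have hSU : ∀ η, S η ∈ U :=
        fun η => hUle (Filter.mem_iInf_of_mem η (Filter.mem_principal_self _))
      have hcauchy : Cauchy (U : Filter X) := by
        rw [Metric.cauchy_iff]
        refine ⟨U.neBot, fun ε hε => ?_⟩
        obtain ⟨η, hη, F, hF⟩ := key (ε / 3) (by linarith)
        have hUnion : (⋃ p ∈ (F : Set X), Metric.closedBall p (ε / 3)) ∈ U :=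
          Filter.mem_of_superset (hSU ⟨η, hη⟩) (by simpa using hF)
        obtain ⟨p, -, hp⟩ := (Ultrafilter.finite_biUnion_mem_iff F.finite_toSet).mp hUnion
        refine ⟨Metric.closedBall p (ε / 3), hp, fun a ha b hb => ?_⟩
        have ha' := Metric.mem_closedBall.mp ha
        have hb' := Metric.mem_closedBall.mp hb
        calc dist a b ≤ dist a p + dist p b := dist_triangle _ _ _
          _ ≤ ε / 3 + ε / 3 := by rw [dist_comm p b]; exact add_le_add ha' hb'
          _ < ε := by linarith
      obtain ⟨y, hy⟩ := CompleteSpace.complete hcauchy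
      have hyS : ∀ η, y ∈ S η := by
        intro η
        have h1 : (U : Filter X) ≤ Filter.principal (S η) :=
          Filter.le_principal_iff.mpr (hSU η)
        have h2 : y ∈ closure (S η) := by
          rw [mem_closure_iff_clusterPt]
          exact Filter.neBot_of_le (le_inf hy h1)
        rwa [(hSclosed η).closure_eq] at h2
      have hyC : y ∈ C := (hyS ⟨1, one_pos⟩).1
      have hled : dist x y ≤ δ := by
        by_contra hgt
        push_neg at hgt
        have := (hyS ⟨(dist x y - δ) / 2, by linarith⟩).2
        simp only at this
        linarith
      exact ⟨y, hyC, le_antisymm hled (Metric.infDist_le_dist_of_mem hyC)⟩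
    · -- compactness : closed and totally bounded
      have hPclosed : IsClosed {c ∈ C | dist x c = δ} := by
        have : {c ∈ C | dist x c = δ} = C ∩ {c | dist x c = δ} := rfl
        rw [this]
        exact hcl.inter (isClosed_eq (continuous_const.dist continuous_id) continuous_const)
      apply TotallyBounded.isCompact_of_isClosed _ hPclosed
      rw [Metric.totallyBounded_iff]
      intro ε hε
      obtain ⟨η, hη, F, hF⟩ := key (ε / 2) (by linarith)
      refine ⟨F, F.finite_toSet, fun c hc => ?_⟩
      have hcc : c ∈ ⋃ p ∈ F, Metric.closedBall p (ε / 2) :=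
        hF ⟨hc.1, by rw [hc.2]; linarith⟩
      obtain ⟨p, hp, hcp⟩ := Set.mem_iUnion₂.mp hcc
      exact Set.mem_biUnion hp
        (Metric.mem_ball.mpr ((Metric.mem_closedBall.mp hcp).trans_lt (by linarith)))
end

section
/- Let (X,d) be a complete metric space that is strictly ∞-convex and nearly uniformly convex. Then every nonempty closed convex subset C ⊆ X is Chebyshev: for every x ∈ X there is exactly one c ∈ C with d(x,c) = inf_{c' ∈ C} d(x,c'). -/
open Filter Topology Metric Set MeasureTheory
open scoped ENNReal

/-!
Let `r = d(x, C)` and let `(cₙ)` be a minimizing sequence in `C`. If it had an infinite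
`ε`-separated subsequence, a tail of it would lie in `B_{r+δ}(x)` for small `δ`, and near uniform
convexity would produce a point of its closed convex hull, hence of `C`, at distance
`≤ (1 - ρ)(r + δ) < r` from `x`. So `(cₙ)` is totally bounded and, `X` being complete, has a
cluster point, which is a nearest point. Two distinct nearest points would have a midpoint in `C`
(in a complete space with midpoints, dyadic subdivision yields geodesics), and by strict
`∞`-convexity it would be closer to `x` than `r`.
-/

section DyadicSubdivision

variable {X : Type} (mid : X → X → X) (x y : X)

/-- Level `n` of the dyadic subdivision from `x` to `y` generated by `mid`: the point
`dyadicPoint mid x y n k` stands for the parameter `k / 2 ^ n`. -/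
noncomputable def dyadicPoint : ℕ → ℕ → X
  | 0, k => if k = 0 then x else y
  | n + 1, k => if k % 2 = 0 then dyadicPoint n (k / 2)
      else mid (dyadicPoint n (k / 2)) (dyadicPoint n (k / 2 + 1))

lemma dyadicPoint_zero (n : ℕ) : dyadicPoint mid x y n 0 = x := by
  induction n with
  | zero => simp [dyadicPoint]
  | succ n ih => simp [dyadicPoint, ih]

lemma dyadicPoint_succ_two_mul (n k : ℕ) :
    dyadicPoint mid x y (n + 1) (2 * k) = dyadicPoint mid x y n k := by
  simp [dyadicPoint]

lemma dyadicPoint_two_pow (n : ℕ) : dyadicPoint mid x y n (2 ^ n) = y := by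
  induction n with
  | zero => simp [dyadicPoint]
  | succ n ih => rw [pow_succ', dyadicPoint_succ_two_mul, ih]

lemma dyadicPoint_add_mul_two_pow (n j k : ℕ) :
    dyadicPoint mid x y (n + j) (k * 2 ^ j) = dyadicPoint mid x y n k := by
  induction j with
  | zero => simp
  | succ j ih => rw [← add_assoc, pow_succ', mul_left_comm, dyadicPoint_succ_two_mul, ih]

variable [MetricSpace X] {mid} (hmid : ∀ a b, IsMidpoint a b (mid a b))
include hmid

lemma dist_dyadicPoint_succ (n k : ℕ) (hk : k < 2 ^ n) :
    dist (dyadicPoint mid x y n k) (dyadicPoint mid x y n (k + 1)) = dist x y / 2 ^ n := by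
  induction n generalizing k with
  | zero =>
    obtain rfl : k = 0 := by simpa using hk
    simp [dyadicPoint]
  | succ n ih =>
    have hsucc : dyadicPoint mid x y (n + 1) (2 * (k / 2) + 1) =
        mid (dyadicPoint mid x y n (k / 2)) (dyadicPoint mid x y n (k / 2 + 1)) := by
      have hdiv : (2 * (k / 2) + 1) / 2 = k / 2 := by omega
      simp [dyadicPoint, hdiv, Nat.add_mod]
    have hlt : k / 2 < 2 ^ n := by rw [pow_succ] at hk; omega
    rcases Nat.even_or_odd' k with ⟨j, rfl | rfl⟩
    · rw [dyadicPoint_succ_two_mul, ← Nat.mul_div_cancel_left j two_pos, hsucc,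
        (hmid _ _).1, Nat.mul_div_cancel_left j two_pos]
      rw [Nat.mul_div_cancel_left j two_pos] at hlt
      rw [ih j hlt, pow_succ]; ring
    · have hj : (2 * j + 1) / 2 = j := by omega
      rw [show 2 * j + 1 + 1 = 2 * (j + 1) by ring, dyadicPoint_succ_two_mul, ← hj, hsucc,
        dist_comm, (hmid _ _).2, hj]
      rw [hj] at hlt
      rw [ih j hlt, pow_succ]; ring

lemma dist_dyadicPoint_le {n k l : ℕ} (hkl : k ≤ l) (hl : l ≤ 2 ^ n) :
    dist (dyadicPoint mid x y n k) (dyadicPoint mid x y n l) ≤ (l - k) * (dist x y / 2 ^ n) := by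
  induction l, hkl using Nat.le_induction with
  | base => simp
  | succ l hkl ih =>
    calc dist (dyadicPoint mid x y n k) (dyadicPoint mid x y n (l + 1))
        ≤ dist (dyadicPoint mid x y n k) (dyadicPoint mid x y n l) +
            dist (dyadicPoint mid x y n l) (dyadicPoint mid x y n (l + 1)) := dist_triangle _ _ _
      _ ≤ (l - k) * (dist x y / 2 ^ n) + dist x y / 2 ^ n := by
          gcongr
          · exact ih (by omega)
          · exact (dist_dyadicPoint_succ x y hmid n l (by omega)).le
      _ = ((l + 1 : ℕ) - k) * (dist x y / 2 ^ n) := by push_cast; ring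

/-- The level-`n` chain from `x` to `y` has total length `dist x y`, so no triangle inequality
along it can be strict. -/
lemma dist_dyadicPoint_of_le {n k l : ℕ} (hkl : k ≤ l) (hl : l ≤ 2 ^ n) :
    dist (dyadicPoint mid x y n k) (dyadicPoint mid x y n l) = (l - k) * (dist x y / 2 ^ n) := by
  refine le_antisymm (dist_dyadicPoint_le x y hmid hkl hl) ?_
  have hleft := dist_dyadicPoint_le x y hmid (Nat.zero_le k) (hkl.trans hl)
  have hright := dist_dyadicPoint_le x y hmid hl le_rfl
  have hchain := dist_triangle4 (dyadicPoint mid x y n 0) (dyadicPoint mid x y n k)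
    (dyadicPoint mid x y n l) (dyadicPoint mid x y n (2 ^ n))
  rw [dyadicPoint_zero, dyadicPoint_two_pow] at hchain
  rw [dyadicPoint_zero] at hleft
  rw [dyadicPoint_two_pow] at hright
  have hpow : (2 : ℝ) ^ n * (dist x y / 2 ^ n) = dist x y := by field_simp
  push_cast at hleft hright
  linarith

lemma dist_dyadicPoint {n m k l : ℕ} (hk : k ≤ 2 ^ n) (hl : l ≤ 2 ^ m) :
    dist (dyadicPoint mid x y n k) (dyadicPoint mid x y m l) =
      dist x y * |(k : ℝ) / 2 ^ n - l / 2 ^ m| := by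
  rw [← dyadicPoint_add_mul_two_pow mid x y n m k, ← dyadicPoint_add_mul_two_pow mid x y m n l,
    add_comm m n]
  have hk' : k * 2 ^ m ≤ 2 ^ (n + m) := by rw [pow_add]; gcongr
  have hl' : l * 2 ^ n ≤ 2 ^ (n + m) := by rw [pow_add, mul_comm (2 ^ n)]; gcongr
  have habs : |(k : ℝ) / 2 ^ n - l / 2 ^ m| =
      |((k * 2 ^ m : ℕ) : ℝ) - (l * 2 ^ n : ℕ)| / 2 ^ (n + m) := by
    rw [← abs_of_pos (by positivity : (0 : ℝ) < 2 ^ (n + m)), ← abs_div]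
    push_cast; congr 1; rw [pow_add]; field_simp
  rw [habs]
  rcases le_total (k * 2 ^ m) (l * 2 ^ n) with h | h
  · rw [dist_dyadicPoint_of_le x y hmid h hl', abs_sub_comm,
      abs_of_nonneg (sub_nonneg.2 (by exact_mod_cast h))]; ring
  · rw [dist_comm, dist_dyadicPoint_of_le x y hmid h hk',
      abs_of_nonneg (sub_nonneg.2 (by exact_mod_cast h))]; ring

end DyadicSubdivision

section Geodesic

variable {X : Type} [MetricSpace X]

lemma tendsto_floor_mul_two_pow_div {t : ℝ} (ht : 0 ≤ t) :
    Tendsto (fun n : ℕ => (⌊t * 2 ^ n⌋₊ : ℝ) / 2 ^ n) atTop (𝓝 t) :=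
  (tendsto_nat_floor_mul_div_atTop ht).comp (tendsto_pow_atTop_atTop_of_one_lt one_lt_two)

/-- The geodesic is the limit of the dyadic approximations `t ≈ ⌊t 2ⁿ⌋ / 2ⁿ`. -/
theorem AdmitsMidpoints.exists_isGeodesic [CompleteSpace X] (h : AdmitsMidpoints X) (x y : X) :
    ∃ γ : ℝ → X, IsGeodesic γ x y := by
  have : Nonempty X := ⟨x⟩
  choose mid hmid using h
  set a : ℝ → ℕ → ℕ := fun t n => ⌊t * 2 ^ n⌋₊
  set u : ℝ → ℕ → X := fun t n => dyadicPoint mid x y n (a t n)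
  have ha_le : ∀ t ∈ Icc (0 : ℝ) 1, ∀ n, a t n ≤ 2 ^ n := fun t ht n =>
    Nat.floor_le_of_le (by simpa using mul_le_of_le_one_left (pow_nonneg zero_le_two n) ht.2)
  have hu_dist : ∀ s ∈ Icc (0 : ℝ) 1, ∀ t ∈ Icc (0 : ℝ) 1, ∀ n m,
      dist (u s n) (u t m) = dist x y * dist ((a s n : ℝ) / 2 ^ n) ((a t m : ℝ) / 2 ^ m) :=
    fun s hs t ht n m => dist_dyadicPoint x y hmid (ha_le s hs n) (ha_le t ht m)
  have hu_cauchy : ∀ t ∈ Icc (0 : ℝ) 1, CauchySeq (u t) := by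
    intro t ht
    have hcauchy :=
      cauchySeq_iff_tendsto_dist_atTop_0.1 (tendsto_floor_mul_two_pow_div ht.1).cauchySeq
    rw [cauchySeq_iff_tendsto_dist_atTop_0]
    simpa [Function.comp_def, hu_dist t ht t ht] using hcauchy.const_mul (dist x y)
  have hu_lim : ∀ t ∈ Icc (0 : ℝ) 1, Tendsto (u t) atTop (𝓝 (limUnder atTop (u t))) :=
    fun t ht => (hu_cauchy t ht).tendsto_limUnder
  have hlim_const : ∀ t ∈ Icc (0 : ℝ) 1, ∀ z, (∀ n, u t n = z) → limUnder atTop (u t) = z :=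
    fun t ht z hz => tendsto_nhds_unique (hu_lim t ht) (by simp [funext hz])
  refine ⟨fun t => limUnder atTop (u t), ?_, ?_, ?_⟩
  · exact hlim_const 0 (by simp) x fun n => by simp [u, a, dyadicPoint_zero]
  · refine hlim_const 1 (by simp) y fun n => ?_
    simp only [u, a, one_mul]
    rw [← Nat.cast_ofNat, ← Nat.cast_pow, Nat.floor_natCast, dyadicPoint_two_pow]
  · intro s hs t ht
    have hlim := (hu_lim s hs).dist (hu_lim t ht)
    simp only [hu_dist s hs t ht] at hlim
    have hlim' := ((tendsto_floor_mul_two_pow_div hs.1).dist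
      (tendsto_floor_mul_two_pow_div ht.1)).const_mul (dist x y)
    rw [tendsto_nhds_unique hlim hlim', Real.dist_eq, mul_comm]

lemma IsGeodesic.isMidpoint_half {γ : ℝ → X} {x y : X} (hγ : IsGeodesic γ x y) :
    IsMidpoint x y (γ (1 / 2)) := by
  obtain ⟨h0, h1, hdist⟩ := hγ
  constructor
  · rw [← h0, hdist 0 (by simp) (1 / 2) (by norm_num), h0]; norm_num; ring
  · rw [← h1, hdist 1 (by simp) (1 / 2) (by norm_num), h1]; norm_num; ring

lemma GConvex.exists_isMidpoint_mem [CompleteSpace X] {C : Set X} (hC : GConvex C)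
    (h : AdmitsMidpoints X) {x y : X} (hx : x ∈ C) (hy : y ∈ C) :
    ∃ m ∈ C, IsMidpoint x y m := by
  obtain ⟨γ, hγ⟩ := h.exists_isGeodesic x y
  exact ⟨γ (1 / 2), hC x hx y hy γ hγ (1 / 2) (by norm_num), hγ.isMidpoint_half⟩

end Geodesic

section NearestPoint

variable {X : Type} [MetricSpace X]

lemma gConvexHull_min {A C : Set X} (hAC : A ⊆ C) (hC : GConvex C) : gConvexHull A ⊆ C :=
  sInter_subset_of_mem ⟨hC, hAC⟩

lemma exists_seq_mem_tendsto_infDist {C : Set X} (hne : C.Nonempty) (x : X) :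
    ∃ c : ℕ → X, (∀ n, c n ∈ C) ∧ Tendsto (fun n => dist x (c n)) atTop (𝓝 (infDist x C)) := by
  have : ∀ n : ℕ, ∃ c ∈ C, dist x c < infDist x C + 1 / (n + 1) := fun n =>
    (infDist_lt_iff hne).1 (lt_add_of_pos_right _ Nat.one_div_pos_of_nat)
  choose c hcC hc using this
  refine ⟨c, hcC, tendsto_of_tendsto_of_tendsto_of_le_of_le tendsto_const_nhds ?_
    (fun n => infDist_le_dist_of_mem (hcC n)) fun n => (hc n).le⟩
  simpa using (tendsto_one_div_add_atTop_nhds_zero_nat (𝕜 := ℝ)).const_add (infDist x C)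

lemma exists_separated_subseq_of_not_totallyBounded {c : ℕ → X}
    (hc : ¬TotallyBounded (range c)) :
    ∃ ε > 0, ∃ φ : ℕ → ℕ, Tendsto φ atTop atTop ∧
      Pairwise fun i j => ε ≤ dist (c (φ i)) (c (φ j)) := by
  obtain ⟨ε, hε, hcover⟩ : ∃ ε > 0, ∀ t : Set X, t.Finite → ¬range c ⊆ ⋃ y ∈ t, ball y ε := by
    simpa [Metric.totallyBounded_iff] using hc
  have hfar : ∀ s : Set ℕ, s.Finite → ∃ m, ∀ k ∈ s, ε ≤ dist (c m) (c k) := by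
    intro s hs
    obtain ⟨_, ⟨m, rfl⟩, hm⟩ := not_subset.1 (hcover _ (hs.image c))
    exact ⟨m, fun k hk => not_lt.1 fun h => hm (mem_biUnion (mem_image_of_mem c hk) (mem_ball.2 h))⟩
  obtain ⟨φ, hφ⟩ := seq_of_forall_finite_exists hfar
  have hsep : Pairwise fun i j => ε ≤ dist (c (φ i)) (c (φ j)) := by
    intro i j hij
    rcases hij.lt_or_gt with h | h
    · rw [dist_comm]; exact hφ j _ (mem_image_of_mem φ h)
    · exact hφ i _ (mem_image_of_mem φ h)
  refine ⟨ε, hε, φ, Function.Injective.nat_tendsto_atTop fun i j hij => ?_, hsep⟩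
  by_contra hne
  have hdist : ε ≤ dist (c (φ i)) (c (φ j)) := hsep hne
  rw [hij, dist_self] at hdist
  linarith

lemma NearlyUniformlyConvex.not_tendsto_infDist_of_separated (h : NearlyUniformlyConvex X)
    {C : Set X} (hcl : IsClosed C) (hconv : GConvex C) {x : X} (hx : 0 < infDist x C)
    {ε : ℝ} (hε : 0 < ε) {u : ℕ → X} (hu : ∀ n, u n ∈ C)
    (hsep : Pairwise fun i j => ε ≤ dist (u i) (u j)) :
    ¬Tendsto (fun n => dist x (u n)) atTop (𝓝 (infDist x C)) := by
  intro hlim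
  set r := infDist x C
  obtain ⟨ρ, hρ, hmod⟩ := h.2 (r + 1) (by linarith) ε hε
  set δ := min 1 (ρ * r / 2)
  have hδ : 0 < δ := lt_min one_pos (by positivity)
  obtain ⟨N, hN⟩ := eventually_atTop.1 (hlim.eventually (ge_mem_nhds (lt_add_of_pos_right r hδ)))
  obtain ⟨z, hzx, hz⟩ := hmod ℕ (fun i => u (i + N)) x (r + δ)
    (by linarith [min_le_left 1 (ρ * r / 2)]) (fun i j hij => hsep (by omega))
    (fun i => by rw [dist_comm]; exact hN _ (by omega))
  have hzC : z ∈ C :=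
    closure_minimal (gConvexHull_min (range_subset_iff.2 fun i => hu _) hconv) hcl hz
  have hrz : r ≤ dist z x := by rw [dist_comm]; exact infDist_le_dist_of_mem hzC
  nlinarith [mem_closedBall.1 hzx, min_le_right 1 (ρ * r / 2), mul_pos hρ hδ]

theorem NearlyUniformlyConvex.exists_dist_eq_infDist [CompleteSpace X]
    (h : NearlyUniformlyConvex X) {C : Set X} (hne : C.Nonempty) (hcl : IsClosed C)
    (hconv : GConvex C) (x : X) : ∃ c ∈ C, dist x c = infDist x C := by
  by_cases hx : x ∈ C
  · exact ⟨x, hx, by rw [dist_self, infDist_zero_of_mem hx]⟩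
  have hpos : 0 < infDist x C := (hcl.notMem_iff_infDist_pos hne).1 hx
  obtain ⟨c, hcC, hc⟩ := exists_seq_mem_tendsto_infDist hne x
  have htb : TotallyBounded (range c) := by
    by_contra hntb
    obtain ⟨ε, hε, φ, hφ, hsep⟩ := exists_separated_subseq_of_not_totallyBounded hntb
    exact h.not_tendsto_infDist_of_separated hcl hconv hpos hε (fun n => hcC (φ n)) hsep
      (hc.comp hφ)
  obtain ⟨a, -, ψ, hψ, ha⟩ := (htb.closure.isCompact_of_isClosed isClosed_closure).tendsto_subseq
    fun n => subset_closure (mem_range_self n)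
  exact ⟨a, hcl.mem_of_tendsto ha (Eventually.of_forall fun n => hcC _),
    tendsto_nhds_unique (tendsto_const_nhds.dist ha) (hc.comp hψ.tendsto_atTop)⟩

theorem StrictlyInftyConvex.eq_of_dist_eq_infDist [CompleteSpace X] (h : StrictlyInftyConvex X)
    {C : Set X} (hconv : GConvex C) {x c₀ c₁ : X} (hc₀ : c₀ ∈ C) (hc₁ : c₁ ∈ C)
    (hd₀ : dist x c₀ = infDist x C) (hd₁ : dist x c₁ = infDist x C) : c₀ = c₁ := by
  by_contra hne
  obtain ⟨m, hmC, hm⟩ := hconv.exists_isMidpoint_mem h.1 hc₀ hc₁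
  have hlt := h.2 c₀ c₁ x m hm hne
  rw [dist_comm c₀, dist_comm c₁, hd₀, hd₁, max_self, dist_comm] at hlt
  exact (infDist_le_dist_of_mem hmC).not_gt hlt

end NearestPoint

/-- In a complete, strictly `∞`-convex, nearly uniformly convex space every
nonempty closed convex set is Chebyshev. -/
theorem closed_convex_chebyshev (X : Type) [MetricSpace X] [CompleteSpace X]
    (h1 : StrictlyInftyConvex X) (h2 : NearlyUniformlyConvex X)
    (C : Set X) (hne : C.Nonempty) (hcl : IsClosed C) (hconv : GConvex C) (x : X) :
    ∃! c : X, c ∈ C ∧ dist x c = Metric.infDist x C := by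
  obtain ⟨c, hc, hcd⟩ := h2.exists_dist_eq_infDist hne hcl hconv x
  exact ⟨c, ⟨hc, hcd⟩, fun c' ⟨hc', hcd'⟩ => h1.eq_of_dist_eq_infDist hconv hc' hc hcd' hcd⟩
end

section
/- Every complete nearly uniformly convex metric space is reflexive. -/
open Filter Topology Metric Set MeasureTheory
open scoped ENNReal

/-!
Call `r` admissible at `y` if `closedBall y r` meets every `C i`. If `r` is admissible at `y`
but `(1 - ρ) * r` is not, some `C i₀` misses the smaller ball, so by near uniform convexity every
`ε`-separated subset of `closedBall y r ∩ C i₀` is finite: its closed convex hull lies in `C i₀`.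
A maximal one is then a finite `ε`-net, and directedness yields a net point at which `ε` is
admissible. Halving the admissible radius again and again produces a Cauchy sequence of centres
whose limit lies in every `C i`.
-/

open scoped NNReal

namespace Metric

variable {X : Type*} [PseudoEMetricSpace X]

theorem exists_maximal_isSeparated (ε : ℝ≥0∞) (s : Set X) :
    ∃ N, Maximal (fun N ↦ N ⊆ s ∧ IsSeparated ε N) N :=
  zorn_subset _ fun c hcS hc ↦
    ⟨⋃₀ c, ⟨sUnion_subset fun _ hN ↦ (hcS hN).1, hc.pairwise_sUnion.2 fun _ hN ↦ (hcS hN).2⟩,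
      fun _ ↦ subset_sUnion_of_mem⟩

theorem exists_finite_isCover_of_isSeparated_finite {ε : ℝ≥0} {s : Set X}
    (hs : ∀ N, N ⊆ s → IsSeparated ε N → N.Finite) : ∃ N ⊆ s, N.Finite ∧ IsCover ε s N := by
  obtain ⟨N, hN⟩ := exists_maximal_isSeparated ε s
  exact ⟨N, hN.prop.1, hs N hN.prop.1 hN.prop.2, .of_maximal_isSeparated hN⟩

end Metric

section DirectedFamily

variable {X : Type*} [PseudoMetricSpace X] {I : Type*} [Preorder I] [IsDirected I (· ≤ ·)]
  {C : I → Set X}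

theorem Antitone.exists_closedBall_inter_nonempty_of_isCover (hC : Antitone C) {A N : Set X}
    {ε : ℝ≥0} {i₀ : I} (hA : ∀ i, (A ∩ C i).Nonempty) (hNfin : N.Finite)
    (hN : IsCover ε (A ∩ C i₀) N) : ∃ s ∈ N, ∀ i, (closedBall s ε ∩ C i).Nonempty := by
  have : Nonempty I := ⟨i₀⟩
  by_contra! hbad
  choose! j hj using hbad
  obtain ⟨k, hk⟩ := ((hNfin.image j).insert i₀).bddAbove
  obtain ⟨w, hwA, hwk⟩ := hA k
  obtain ⟨s, hsN, hws⟩ : ∃ s ∈ N, w ∈ closedBall s ε := by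
    simpa using hN.subset_iUnion_closedBall ⟨hwA, hC (hk (mem_insert _ _)) hwk⟩
  have hwj : w ∈ closedBall s ε ∩ C (j s) :=
    ⟨hws, hC (hk (mem_insert_of_mem _ (mem_image_of_mem _ hsN))) hwk⟩
  simp [hj s hsN] at hwj

theorem Antitone.exists_closedBall_inter_nonempty (hC : Antitone C)
    (hne : ∀ i, (C i).Nonempty) {i₀ : I} (hbd : Bornology.IsBounded (C i₀)) :
    ∃ y R, 0 < R ∧ ∀ i, (closedBall y R ∩ C i).Nonempty := by
  obtain ⟨y, hy⟩ := hne i₀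
  refine ⟨y, diam (C i₀) + 1, by positivity, fun i ↦ ?_⟩
  obtain ⟨k, hik, hi₀k⟩ := directed_of (· ≤ ·) i i₀
  obtain ⟨w, hw⟩ := hne k
  exact ⟨w, mem_closedBall.2 ((dist_le_diam_of_mem hbd (hC hi₀k hw) hy).trans (by linarith)),
    hC hik hw⟩

end DirectedFamily

theorem IsClosed.mem_of_tendsto_of_closedBall_inter_nonempty {X ι : Type*} [PseudoMetricSpace X]
    {l : Filter ι} [l.NeBot] {K : Set X} (hK : IsClosed K) {z : ι → X} {p : X} {r : ι → ℝ}
    (hz : Tendsto z l (𝓝 p)) (hr : Tendsto r l (𝓝 0))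
    (h : ∀ n, (closedBall (z n) (r n) ∩ K).Nonempty) : p ∈ K := by
  choose w hwz hwK using h
  refine hK.mem_of_tendsto (b := l) (tendsto_iff_dist_tendsto_zero.2 ?_)
    (Eventually.of_forall hwK)
  have hbound : Tendsto (fun n ↦ r n + dist (z n) p) l (𝓝 0) := by
    simpa using hr.add (tendsto_iff_dist_tendsto_zero.1 hz)
  refine squeeze_zero (fun _ ↦ dist_nonneg) (fun n ↦ ?_) hbound
  exact (dist_triangle _ _ _).trans (add_le_add_left (mem_closedBall.1 (hwz n)) _)

theorem exists_tendsto_of_forall_exists_dist_le_half {X : Type*} [PseudoMetricSpace X]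
    [CompleteSpace X] {P : X → ℝ → Prop}
    (hstep : ∀ y r, 0 < r → P y r → ∃ s, dist y s ≤ r ∧ P s (r / 2)) {y₀ : X} {R : ℝ}
    (hR : 0 < R) (h₀ : P y₀ R) :
    ∃ (z : ℕ → X) (p : X), Tendsto z atTop (𝓝 p) ∧ ∀ n, P (z n) (R / 2 ^ n) := by
  choose! next hdist hnext using hstep
  let z : ℕ → X := fun n ↦ Nat.rec y₀ (fun n y ↦ next y (R / 2 ^ n)) n
  have hz (n : ℕ) : P (z n) (R / 2 ^ n) := by
    induction n with
    | zero => simpa [z] using h₀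
    | succ n ih => rw [pow_succ, ← div_div]; exact hnext _ _ (by positivity) ih
  have hcauchy : CauchySeq z := cauchySeq_of_le_geometric_two (C := 2 * R) fun n ↦ by
    simpa using hdist _ _ (by positivity) (hz n)
  obtain ⟨p, hp⟩ := cauchySeq_tendsto_of_complete hcauchy
  exact ⟨z, p, hp, hz⟩

theorem IsUpperSet.exists_mem_le_and_le_or_mul_notMem {T : Set ℝ} (hT : IsUpperSet T) {r₁ : ℝ}
    (hr₁ : r₁ ∈ T) {ε ρ : ℝ} (hε : 0 < ε) (hρ : 0 < ρ) :
    ∃ r ∈ T, r ≤ r₁ ∧ (r ≤ ε ∨ (1 - ρ) * r ∉ T) := by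
  by_contra! hshrink
  -- As long as `r > ε`, shrinking `r` by the factor `1 - ρ` removes at least `ρ * ε`.
  have hstep (k : ℕ) : r₁ - k * (ρ * ε) ∈ T := by
    induction k with
    | zero => simpa using hr₁
    | succ k ih =>
      obtain ⟨hεr, hmem⟩ := hshrink _ ih (sub_le_self _ (by positivity))
      exact hT (by push_cast; nlinarith) hmem
  obtain ⟨k, hk⟩ := exists_nat_gt (r₁ / (ρ * ε))
  have := (hshrink _ (hstep k) (sub_le_self _ (by positivity))).1
  rw [div_lt_iff₀ (by positivity)] at hk
  linarith

theorem gConvexHull_subset {X : Type} [MetricSpace X] {A D : Set X} (hD : GConvex D)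
    (hAD : A ⊆ D) : gConvexHull A ⊆ D :=
  sInter_subset_of_mem ⟨hD, hAD⟩

namespace NUCModulus

variable {X : Type} [MetricSpace X] {ε : ℝ≥0} {R ρ : ℝ}

theorem finite_of_isSeparated (hmod : NUCModulus X ε R ρ) {K : Set X} (hKcl : IsClosed K)
    (hKcv : GConvex K) {y : X} {r : ℝ} (hrR : r ≤ R)
    (hK : Disjoint (closedBall y ((1 - ρ) * r)) K) {N : Set X} (hNK : N ⊆ closedBall y r ∩ K)
    (hN : IsSeparated ε N) : N.Finite := by
  by_contra hinf
  have : Infinite N := Set.infinite_coe_iff.2 hinf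
  have hsep (a b : N) (hab : a ≠ b) : (ε : ℝ) ≤ dist a.1 b.1 := by
    have : (ε : ℝ≥0∞) < edist a.1 b.1 := hN a.2 b.2 (Subtype.coe_ne_coe.2 hab)
    rw [edist_nndist, ENNReal.coe_lt_coe, ← NNReal.coe_lt_coe, coe_nndist] at this
    exact this.le
  obtain ⟨z, hz, hzK⟩ := hmod N Subtype.val y r hrR hsep fun a ↦ (hNK a.2).1
  have hhull : closure (gConvexHull (range (Subtype.val : N → X))) ⊆ K :=
    hKcl.closure_subset_iff.2 (gConvexHull_subset hKcv
      (Subtype.range_coe.symm ▸ fun x hx ↦ (hNK hx).2))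
  exact hK.ne_of_mem hz (hhull hzK) rfl

variable {I : Type} [Preorder I] [IsDirected I (· ≤ ·)] {C : I → Set X}

theorem exists_closedBall_inter_nonempty (hmod : NUCModulus X ε R ρ) (hC : Antitone C)
    (hcl : ∀ i, IsClosed (C i)) (hcv : ∀ i, GConvex (C i)) {y : X} {r : ℝ} (hrR : r ≤ R)
    (hr : ∀ i, (closedBall y r ∩ C i).Nonempty) {i₀ : I}
    (hi₀ : Disjoint (closedBall y ((1 - ρ) * r)) (C i₀)) :
    ∃ s, dist y s ≤ r ∧ ∀ i, (closedBall s ε ∩ C i).Nonempty := by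
  obtain ⟨N, hNsub, hNfin, hNcover⟩ := exists_finite_isCover_of_isSeparated_finite
    fun N hNsub hN ↦ hmod.finite_of_isSeparated (hcl i₀) (hcv i₀) hrR hi₀ hNsub hN
  obtain ⟨s, hsN, hs⟩ := hC.exists_closedBall_inter_nonempty_of_isCover hr hNfin hNcover
  exact ⟨s, by simpa [dist_comm] using (hNsub hsN).1, hs⟩

end NUCModulus

theorem NearlyUniformlyConvex.exists_closedBall_inter_nonempty_half {X : Type} [MetricSpace X]
    (h : NearlyUniformlyConvex X) {I : Type} [Preorder I] [IsDirected I (· ≤ ·)]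
    {C : I → Set X} (hC : Antitone C) (hcl : ∀ i, IsClosed (C i)) (hcv : ∀ i, GConvex (C i))
    {y : X} {r : ℝ} (hr : 0 < r) (hy : ∀ i, (closedBall y r ∩ C i).Nonempty) :
    ∃ s, dist y s ≤ r ∧ ∀ i, (closedBall s (r / 2) ∩ C i).Nonempty := by
  obtain ⟨ρ, hρ, hmod⟩ := h.2 r hr (r / 2) (half_pos hr)
  have hT : IsUpperSet {t : ℝ | ∀ i, (closedBall y t ∩ C i).Nonempty} := fun a b hab ha i ↦
    (ha i).mono (inter_subset_inter_left _ (closedBall_subset_closedBall hab))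
  obtain ⟨t, ht, htr, hsmall | hshrink⟩ :=
    hT.exists_mem_le_and_le_or_mul_notMem hy (half_pos hr) hρ
  · exact ⟨y, by simpa using hr.le, hT hsmall ht⟩
  · simp only [mem_ofPred_eq, not_forall, not_nonempty_iff_eq_empty] at hshrink
    obtain ⟨i₀, hi₀⟩ := hshrink
    obtain ⟨s, hys, hs⟩ := hmod.exists_closedBall_inter_nonempty (ε := ⟨r / 2, (half_pos hr).le⟩)
      hC hcl hcv htr ht (disjoint_iff_inter_eq_empty.2 hi₀)
    exact ⟨s, hys.trans htr, hs⟩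

/-- Every complete nearly uniformly convex metric space is reflexive. -/
theorem nearlyUniformlyConvex_reflexive (X : Type) [MetricSpace X] [CompleteSpace X]
    (h : NearlyUniformlyConvex X) : MetricReflexive X := by
  intro I _ _ _ C hne hbd hcl hcv hdec
  have hC : Antitone C := fun i j hij ↦ hdec j i hij
  obtain ⟨y₀, R, hR, h₀⟩ := hC.exists_closedBall_inter_nonempty hne (hbd (Classical.arbitrary I))
  obtain ⟨z, p, hzp, hz⟩ := exists_tendsto_of_forall_exists_dist_le_half
    (P := fun y r ↦ ∀ i, (closedBall y r ∩ C i).Nonempty)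
    (fun _ _ hr hy ↦ h.exists_closedBall_inter_nonempty_half hC hcl hcv hr hy) hR h₀
  have hrad : Tendsto (fun n : ℕ ↦ R / 2 ^ n) atTop (𝓝 0) :=
    tendsto_const_nhds.div_atTop (tendsto_pow_atTop_atTop_of_one_lt one_lt_two)
  exact ⟨p, mem_iInter.2 fun i ↦
    (hcl i).mem_of_tendsto_of_closedBall_inter_nonempty hzp hrad fun n ↦ hz n i⟩
end

section
/- Let (X,d) be a complete metric space that is strictly ∞-convex and nearly uniformly convex. Then every pair x,y ∈ X has a unique midpoint m(x,y), and the midpoint map m : X × X → X is continuous. -/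
open Filter Topology Metric Set MeasureTheory
open scoped ENNReal

/-
Approximate midpoints of `x` and `y` (points within `d(x,y)/2 + δ` of both) form, for small `δ`,
a set containing no infinite `ε`-separated family: otherwise near uniform convexity, applied in the
ball around `x`, would produce a point of their closed convex hull, which lies in a ball around `y`,
too close to both `x` and `y`. Hence an ultrafilter containing all sets of approximate midpoints is
Cauchy; its limit is a midpoint, unique by strict `∞`-convexity. So the approximate midpoint sets
shrink to the midpoint, which gives continuity of the midpoint map.
-/

section Geodesic

lemma le_max_of_forall_midpoint_le_max {f : ℝ → ℝ} {a b : ℝ} (hf : ContinuousOn f (Icc a b))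
    (hmid : ∀ s ∈ Icc a b, ∀ t ∈ Icc a b, f ((s + t) / 2) ≤ max (f s) (f t)) :
    ∀ t ∈ Icc a b, f t ≤ max (f a) (f b) := by
  set M := max (f a) (f b)
  by_contra! ⟨t, ht, hMt⟩
  have hA : IsClosed (Icc a t ∩ f ⁻¹' Iic M) :=
    (hf.mono (Icc_subset_Icc_right ht.2)).preimage_isClosed_of_isClosed isClosed_Icc isClosed_Iic
  have hB : IsClosed (Icc t b ∩ f ⁻¹' Iic M) :=
    (hf.mono (Icc_subset_Icc_left ht.1)).preimage_isClosed_of_isClosed isClosed_Icc isClosed_Iic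
  have hbddA : BddAbove (Icc a t ∩ f ⁻¹' Iic M) := ⟨t, fun s hs => hs.1.2⟩
  have hbddB : BddBelow (Icc t b ∩ f ⁻¹' Iic M) := ⟨t, fun s hs => hs.1.1⟩
  -- the closest points to `t` on either side where `f ≤ M`
  obtain ⟨⟨hs₁a, hs₁t⟩, hs₁⟩ := hA.csSup_mem ⟨a, ⟨le_rfl, ht.1⟩, (le_max_left _ _ : f a ≤ M)⟩ hbddA
  obtain ⟨⟨hs₂t, hs₂b⟩, hs₂⟩ := hB.csInf_mem ⟨b, ⟨ht.2, le_rfl⟩, (le_max_right _ _ : f b ≤ M)⟩ hbddB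
  set s₁ := sSup (Icc a t ∩ f ⁻¹' Iic M)
  set s₂ := sInf (Icc t b ∩ f ⁻¹' Iic M)
  have hs₁lt : s₁ < t := lt_of_le_of_ne hs₁t fun h => by
    simp only [h, mem_preimage, mem_Iic] at hs₁; linarith
  have hs₂gt : t < s₂ := lt_of_le_of_ne hs₂t fun h => by
    simp only [← h, mem_preimage, mem_Iic] at hs₂; linarith
  have hc : f ((s₁ + s₂) / 2) ≤ M :=
    (hmid s₁ ⟨hs₁a, hs₁t.trans ht.2⟩ s₂ ⟨ht.1.trans hs₂t, hs₂b⟩).trans (max_le hs₁ hs₂)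
  rcases le_total ((s₁ + s₂) / 2) t with hct | htc
  · have := le_csSup hbddA ⟨⟨by linarith, hct⟩, hc⟩
    linarith
  · have := csInf_le hbddB ⟨⟨htc, by linarith⟩, hc⟩
    linarith

variable {X : Type} [MetricSpace X] {γ : ℝ → X} {x y : X}

lemma IsGeodesic.continuousOn (hγ : IsGeodesic γ x y) : ContinuousOn γ (Icc 0 1) :=
  (LipschitzOnWith.of_dist_le_mul (K := nndist x y) fun s hs t ht => by
    rw [hγ.2.2 s hs t ht, coe_nndist, Real.dist_eq, mul_comm]).continuousOn

lemma IsGeodesic.isMidpoint (hγ : IsGeodesic γ x y) {s t : ℝ} (hs : s ∈ Icc (0 : ℝ) 1)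
    (ht : t ∈ Icc (0 : ℝ) 1) : IsMidpoint (γ s) (γ t) (γ ((s + t) / 2)) := by
  have hst : (s + t) / 2 ∈ Icc (0 : ℝ) 1 := ⟨by linarith [hs.1, ht.1], by linarith [hs.2, ht.2]⟩
  have habs_half : ∀ r, |r / 2| * dist x y = |r| * dist x y / 2 := fun r => by
    rw [abs_div, abs_two]; ring
  refine ⟨?_, ?_⟩
  · rw [hγ.2.2 s hs _ hst, hγ.2.2 s hs t ht, show s - (s + t) / 2 = (s - t) / 2 by ring, habs_half]
  · rw [hγ.2.2 t ht _ hst, hγ.2.2 s hs t ht, show t - (s + t) / 2 = (t - s) / 2 by ring, habs_half,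
      abs_sub_comm]

lemma InftyConvex.dist_le_max_of_isGeodesic (h : InftyConvex X) (hγ : IsGeodesic γ x y) (z : X)
    {t : ℝ} (ht : t ∈ Icc (0 : ℝ) 1) : dist (γ t) z ≤ max (dist x z) (dist y z) := by
  have := le_max_of_forall_midpoint_le_max (f := fun t => dist (γ t) z)
    ((continuous_id.dist continuous_const).comp_continuousOn hγ.continuousOn)
    (fun s hs t ht => h.2 _ _ _ _ (hγ.isMidpoint hs ht)) t ht
  rwa [hγ.1, hγ.2.1] at this

lemma InftyConvex.gConvex_closedBall (h : InftyConvex X) (c : X) (r : ℝ) :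
    GConvex (closedBall c r) := fun _ hx _ hy _ hγ _ ht =>
  (h.dist_le_max_of_isGeodesic hγ c ht).trans (max_le hx hy)

lemma gConvexHull_subset_s6 {A C : Set X} (hC : GConvex C) (hAC : A ⊆ C) : gConvexHull A ⊆ C :=
  sInter_subset_of_mem ⟨hC, hAC⟩

end Geodesic

lemma exists_finite_cover_of_forall_not_separated {X : Type*} [PseudoMetricSpace X] {s : Set X}
    {ε : ℝ} (hs : ∀ u : ℕ → X, (∀ n, u n ∈ s) → ¬ Pairwise fun i j => ε ≤ dist (u i) (u j)) :
    ∃ t : Finset X, s ⊆ ⋃ z ∈ t, ball z ε := by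
  by_contra! H
  have : Std.Symm fun p q : X => ε ≤ dist p q := ⟨fun p q h => by rwa [dist_comm]⟩
  obtain ⟨u, hus, hu⟩ := exists_seq_of_forall_finset_exists' (· ∈ s) (fun p q => ε ≤ dist p q)
    fun t _ => by
      obtain ⟨p, hps, hp⟩ := not_subset.1 (H t)
      simp only [mem_iUnion, mem_ball, not_exists, not_lt] at hp
      exact ⟨p, hps, fun q hq => (hp q hq).trans_eq (dist_comm p q)⟩
  exact hs u hus hu

section ApproxMidpoints

variable {X : Type} [MetricSpace X] {x y m : X}

def approxMidpoints (x y : X) (δ : ℝ) : Set X :=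
  closedBall x (dist x y / 2 + δ) ∩ closedBall y (dist x y / 2 + δ)

lemma isClosed_approxMidpoints (x y : X) (δ : ℝ) : IsClosed (approxMidpoints x y δ) :=
  isClosed_closedBall.inter isClosed_closedBall

lemma approxMidpoints_mono (x y : X) {δ δ' : ℝ} (h : δ ≤ δ') :
    approxMidpoints x y δ ⊆ approxMidpoints x y δ' :=
  inter_subset_inter (closedBall_subset_closedBall (by linarith))
    (closedBall_subset_closedBall (by linarith))

lemma isMidpoint_of_forall_mem_approxMidpoints (h : ∀ δ > 0, m ∈ approxMidpoints x y δ) :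
    IsMidpoint x y m := by
  have hx : dist m x ≤ dist x y / 2 := le_of_forall_pos_le_add fun δ hδ => (h δ hδ).1
  have hy : dist m y ≤ dist x y / 2 := le_of_forall_pos_le_add fun δ hδ => (h δ hδ).2
  have := dist_triangle x m y
  exact ⟨by linarith [dist_comm x m, dist_comm y m], by linarith [dist_comm x m, dist_comm y m]⟩

lemma IsMidpoint.mem_approxMidpoints {x' y' : X} (hm : IsMidpoint x' y' m) (x y : X) :
    m ∈ approxMidpoints x y (2 * dist (x', y') (x, y)) := by
  have hx : dist x' x ≤ dist (x', y') (x, y) := by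
    rw [Prod.dist_eq]; exact le_max_left _ _
  have hy : dist y' y ≤ dist (x', y') (x, y) := by
    rw [Prod.dist_eq]; exact le_max_right _ _
  have hxy : dist x' y' ≤ dist x y + dist x' x + dist y' y := by
    linarith [dist_triangle4 x' x y y', dist_comm y y']
  refine ⟨mem_closedBall.2 ?_, mem_closedBall.2 ?_⟩
  · linarith [dist_triangle m x' x, dist_comm m x', hm.1]
  · linarith [dist_triangle m y' y, dist_comm m y', hm.2]

lemma StrictlyInftyConvex.isMidpoint_unique (h : StrictlyInftyConvex X) {m' : X}
    (hm : IsMidpoint x y m) (hm' : IsMidpoint x y m') : m = m' := by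
  by_contra hne
  obtain ⟨c, hc⟩ := h.1 m m'
  have hx := h.2 m m' x c hc hne
  have hy := h.2 m m' y c hc hne
  rw [dist_comm m x, dist_comm m' x, hm.1, hm'.1, max_self] at hx
  rw [dist_comm m y, dist_comm m' y, hm.2, hm'.2, max_self] at hy
  linarith [dist_triangle x c y, dist_comm x c]

lemma NearlyUniformlyConvex.exists_not_separated_approxMidpoints (h : NearlyUniformlyConvex X)
    (x y : X) {ε : ℝ} (hε : 0 < ε) : ∃ δ > 0, ∀ u : ℕ → X,
      (∀ n, u n ∈ approxMidpoints x y δ) → ¬ Pairwise fun i j => ε ≤ dist (u i) (u j) := by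
  rcases eq_or_ne x y with rfl | hxy
  · refine ⟨ε / 4, by positivity, fun u hu hsep => ?_⟩
    have h0 := (hu 0).1
    have h1 := (hu 1).1
    simp only [dist_self, zero_div, zero_add, mem_closedBall] at h0 h1
    linarith [hsep zero_ne_one, dist_triangle_right (u 0) (u 1) x]
  set d := dist x y
  have hd : 0 < d := dist_pos.2 hxy
  obtain ⟨ρ, hρ, hNUC⟩ := h.2 (d / 2 + 1) (by positivity) ε hε
  set δ := min 1 (ρ * d / 8)
  have hδ : 0 < δ := by positivity
  refine ⟨δ, hδ, fun u hu hsep => ?_⟩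
  obtain ⟨z, hzx, hz⟩ := hNUC ℕ u x (d / 2 + δ) (by linarith [min_le_left 1 (ρ * d / 8)]) hsep
    fun i => (hu i).1
  have hzy : dist z y ≤ d / 2 + δ :=
    closure_minimal (gConvexHull_subset_s6 (h.1.gConvex_closedBall y _)
      (range_subset_iff.2 fun i => (hu i).2)) isClosed_closedBall hz
  rw [mem_closedBall] at hzx
  -- `z` would be too close to both `x` and `y`: `d ≤ (2 - ρ) (d/2 + δ) < d`
  nlinarith [dist_triangle_left x y z, min_le_right 1 (ρ * d / 8), mul_pos hρ hδ]

end ApproxMidpoints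

lemma exists_approxMidpoints_subset_ball {X : Type} [MetricSpace X] [CompleteSpace X]
    (h₁ : StrictlyInftyConvex X) (h₂ : NearlyUniformlyConvex X) {x y m : X}
    (hm : IsMidpoint x y m) {ε : ℝ} (hε : 0 < ε) : ∃ δ > 0, approxMidpoints x y δ ⊆ ball m ε := by
  by_contra! H
  choose w hw hwm using fun n : ℕ => not_subset.1 (H (1 / (n + 1)) (by positivity))
  set U := Ultrafilter.of (map w atTop)
  have hU : ∀ s, (∀ n, w n ∈ s) → s ∈ U := fun s hs =>
    Ultrafilter.of_le _ (mem_map.2 (univ_mem' hs))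
  have hU_approx : ∀ δ > 0, approxMidpoints x y δ ∈ U := by
    intro δ hδ
    obtain ⟨N, hN⟩ := exists_nat_one_div_lt hδ
    refine Ultrafilter.of_le _ (mem_map.2 (eventually_atTop.2 ⟨N, fun n hn => ?_⟩))
    refine approxMidpoints_mono x y (le_of_lt ?_) (hw n)
    calc 1 / ((n : ℝ) + 1) ≤ 1 / ((N : ℝ) + 1) := by gcongr
      _ < δ := hN
  -- at every scale, `U` contains one of finitely many small balls
  have hU_cauchy : Cauchy (U : Filter X) := by
    refine Metric.cauchy_iff.2 ⟨U.neBot, fun η hη => ?_⟩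
    obtain ⟨δ, hδ, hsep⟩ := h₂.exists_not_separated_approxMidpoints x y (half_pos hη)
    obtain ⟨t, ht⟩ := exists_finite_cover_of_forall_not_separated hsep
    obtain ⟨z, -, hz⟩ :=
      (Ultrafilter.finite_biUnion_mem_iff t.finite_toSet).1 (mem_of_superset (hU_approx δ hδ) ht)
    refine ⟨_, hz, fun a ha b hb => ?_⟩
    linarith [dist_triangle_right a b z, mem_ball.1 ha, mem_ball.1 hb]
  obtain ⟨a, ha⟩ := CompleteSpace.complete hU_cauchy
  have ha_mem : ∀ s, IsClosed s → s ∈ U → a ∈ s := fun s hs hsU =>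
    hs.mem_of_tendsto ha hsU
  have hma : m = a := h₁.isMidpoint_unique hm <| isMidpoint_of_forall_mem_approxMidpoints
    fun δ hδ => ha_mem _ (isClosed_approxMidpoints x y δ) (hU_approx δ hδ)
  exact ha_mem _ isOpen_ball.isClosed_compl (hU _ hwm) (hma ▸ mem_ball_self hε)

/-- In a complete, strictly `∞`-convex, nearly uniformly convex space,
midpoints are unique and the midpoint map is continuous. -/
theorem midpoint_unique_continuous (X : Type) [MetricSpace X] [CompleteSpace X]
    (h1 : StrictlyInftyConvex X) (h2 : NearlyUniformlyConvex X) :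
    (∀ x y : X, ∃! m : X, IsMidpoint x y m) ∧
    ∀ m : X × X → X, (∀ x y : X, IsMidpoint x y (m (x, y))) → Continuous m := by
  refine ⟨fun x y => ?_, fun m hm => Metric.continuous_iff.2 fun q ε hε => ?_⟩
  · obtain ⟨c, hc⟩ := h1.1 x y
    exact ⟨c, hc, fun c' hc' => h1.isMidpoint_unique hc' hc⟩
  · obtain ⟨δ, hδ, hball⟩ := exists_approxMidpoints_subset_ball h1 h2 (hm q.1 q.2) hε
    refine ⟨δ / 2, half_pos hδ, fun p hp => hball ?_⟩
    exact approxMidpoints_mono _ _ (by linarith) ((hm p.1 p.2).mem_approxMidpoints q.1 q.2)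
end

section
/- On any Banach space X, the co-convex topology (the weakest topology containing all complements of norm-closed convex subsets of X) coincides with the weak topology σ(X,X*). In particular, the co-convex topology on a Banach space is Hausdorff. -/
open Filter Topology Metric Set MeasureTheory
open scoped ENNReal

/-!
A closed half-space `{x | ℓ x ≤ a}` is closed and convex, so every `ℓ ∈ X*` is continuous for
the co-convex topology. Conversely, by Hahn–Banach every point outside a closed convex set is
cut off from it by an open half-space, so closed convex sets are weakly closed. Continuous
functionals separate points, which makes the weak topology Hausdorff.
-/

section CoConvex

variable (E : Type*) [AddCommGroup E] [Module ℝ E] [TopologicalSpace E]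

/-- The analogue of `coConvexTopology` for linear rather than geodesic convexity. -/
abbrev linearCoConvexTopology : TopologicalSpace E :=
  TopologicalSpace.generateFrom {U : Set E | ∃ C : Set E, IsClosed C ∧ Convex ℝ C ∧ U = Cᶜ}

abbrev dualWeakTopology : TopologicalSpace E :=
  ⨅ ℓ : E →L[ℝ] ℝ, TopologicalSpace.induced ℓ inferInstance

variable {E}

theorem isOpen_dualWeakTopology_preimage (ℓ : E →L[ℝ] ℝ) {s : Set ℝ} (hs : IsOpen s) :
    IsOpen[dualWeakTopology E] (ℓ ⁻¹' s) :=
  iInf_le (fun ℓ : E →L[ℝ] ℝ => TopologicalSpace.induced ℓ inferInstance) ℓ _ ⟨s, hs, rfl⟩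

theorem isOpen_linearCoConvexTopology_compl {C : Set E} (hC : IsClosed C) (hconv : Convex ℝ C) :
    IsOpen[linearCoConvexTopology E] Cᶜ :=
  TopologicalSpace.isOpen_generateFrom_of_mem ⟨C, hC, hconv, rfl⟩

theorem continuous_linearCoConvexTopology (ℓ : E →L[ℝ] ℝ) :
    Continuous[linearCoConvexTopology E, _] ℓ := by
  refine (@OrderTopology.continuous_iff ℝ E _ _ _ (linearCoConvexTopology E) ℓ).2
    fun a => ⟨?_, ?_⟩
  · have hIoi : ℓ ⁻¹' Ioi a = {x | ℓ x ≤ a}ᶜ := by ext; simp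
    exact hIoi ▸ isOpen_linearCoConvexTopology_compl
      (isClosed_le ℓ.continuous continuous_const) (convex_halfSpace_le ℓ.isLinear a)
  · have hIio : ℓ ⁻¹' Iio a = {x | a ≤ ℓ x}ᶜ := by ext; simp
    exact hIio ▸ isOpen_linearCoConvexTopology_compl
      (isClosed_le continuous_const ℓ.continuous) (convex_halfSpace_ge ℓ.isLinear a)

theorem IsClosed.isClosed_dualWeakTopology [IsTopologicalAddGroup E] [ContinuousSMul ℝ E]
    [LocallyConvexSpace ℝ E] {C : Set E} (hC : IsClosed C) (hconv : Convex ℝ C) :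
    IsClosed[dualWeakTopology E] C := by
  refine @IsClosed.mk E (dualWeakTopology E) C
    ((@isOpen_iff_forall_mem_open E (dualWeakTopology E) Cᶜ).2 fun x hx => ?_)
  obtain ⟨ℓ, a, hC_le, ha_lt⟩ := geometric_hahn_banach_closed_point hconv hC hx
  exact ⟨ℓ ⁻¹' Ioi a, fun y hy hyC => (hC_le y hyC).not_gt hy,
    isOpen_dualWeakTopology_preimage ℓ isOpen_Ioi, ha_lt⟩

theorem linearCoConvexTopology_eq_dualWeakTopology [IsTopologicalAddGroup E]
    [ContinuousSMul ℝ E] [LocallyConvexSpace ℝ E] :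
    linearCoConvexTopology E = dualWeakTopology E := by
  refine le_antisymm (le_iInf fun ℓ => continuous_iff_le_induced.1
    (continuous_linearCoConvexTopology ℓ)) (le_generateFrom ?_)
  rintro - ⟨C, hC, hconv, rfl⟩
  exact (hC.isClosed_dualWeakTopology hconv).isOpen_compl

theorem t2Space_dualWeakTopology [SeparatingDual ℝ E] : @T2Space E (dualWeakTopology E) :=
  @T2Space.mk E (dualWeakTopology E) fun _ _ hxy => by
    obtain ⟨ℓ, hℓ⟩ := SeparatingDual.exists_separating_of_ne (R := ℝ) hxy
    obtain ⟨u, v, hu, hv, hxu, hyv, huv⟩ := t2_separation hℓ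
    exact ⟨ℓ ⁻¹' u, ℓ ⁻¹' v, isOpen_dualWeakTopology_preimage ℓ hu,
      isOpen_dualWeakTopology_preimage ℓ hv, hxu, hyv, huv.preimage ℓ⟩

end CoConvex

theorem banach_coConvex_eq_weak_general (X : Type) [NormedAddCommGroup X] [NormedSpace ℝ X] :
    (TopologicalSpace.generateFrom
        {U : Set X | ∃ C : Set X, IsClosed C ∧ Convex ℝ C ∧ U = Cᶜ}
      = ⨅ ℓ : X →L[ℝ] ℝ, TopologicalSpace.induced ℓ inferInstance) ∧
    @T2Space X (TopologicalSpace.generateFrom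
        {U : Set X | ∃ C : Set X, IsClosed C ∧ Convex ℝ C ∧ U = Cᶜ}) := by
  have h : linearCoConvexTopology X = dualWeakTopology X :=
    linearCoConvexTopology_eq_dualWeakTopology
  have hT2 : @T2Space X (dualWeakTopology X) := t2Space_dualWeakTopology
  rw [← h] at hT2
  exact ⟨h, hT2⟩

/-- On a Banach space the co-convex topology equals the weak topology; in
particular it is Hausdorff. -/
theorem banach_coConvex_eq_weak (X : Type) [NormedAddCommGroup X] [NormedSpace ℝ X]
    [CompleteSpace X] :
    (TopologicalSpace.generateFrom
        {U : Set X | ∃ C : Set X, IsClosed C ∧ Convex ℝ C ∧ U = Cᶜ}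
      = ⨅ ℓ : X →L[ℝ] ℝ, TopologicalSpace.induced ℓ inferInstance) ∧
    @T2Space X (TopologicalSpace.generateFrom
        {U : Set X | ∃ C : Set X, IsClosed C ∧ Convex ℝ C ∧ U = Cᶜ}) :=
  banach_coConvex_eq_weak_general X
end

section
/- Let (X,d) be a metric space. Every bounded closed convex subset of X is compact in the co-convex topology τ_co if and only if (X,d) is reflexive. -/
open Filter Topology Metric Set MeasureTheory
open scoped ENNReal

lemma GConvex.inter' {X : Type} [MetricSpace X] {A B : Set X} (hA : GConvex A)
    (hB : GConvex B) : GConvex (A ∩ B) := fun x hx y hy γ hγ t ht =>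
  ⟨hA x hx.1 y hy.1 γ hγ t ht, hB x hx.2 y hy.2 γ hγ t ht⟩

lemma coConvex_isClosed {X : Type} [MetricSpace X] {C : Set X} (h1 : IsClosed C)
    (h2 : GConvex C) : @IsClosed X (coConvexTopology X) C :=
  @IsClosed.mk X (coConvexTopology X) C
    (TopologicalSpace.isOpen_generateFrom_of_mem ⟨C, h1, h2, rfl⟩)
/-- Bounded closed convex subsets are compact in the co-convex topology iff
the space is reflexive. -/
theorem coConvex_compact_iff_reflexive (X : Type) [MetricSpace X] :
    (∀ C : Set X, Bornology.IsBounded C → IsClosed C → GConvex C →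
      @IsCompact X (coConvexTopology X) C) ↔ MetricReflexive X := by
  constructor
  · intro h I _ _ _ C hne hbdd hcl hconv hmono
    exact @IsCompact.nonempty_iInter_of_directed_nonempty_isCompact_isClosed
      X (coConvexTopology X) I _ C
      (fun i j => (directed_of (· ≤ ·) i j).imp fun k ⟨hik, hjk⟩ =>
        ⟨hmono k i hik, hmono k j hjk⟩)
      hne (fun i => h (C i) (hbdd i) (hcl i) (hconv i))
      (fun i => coConvex_isClosed (hcl i) (hconv i))
  · intro hRefl C hbdd hcl hconv
    rw [@isCompact_iff_ultrafilter_le_nhds X (coConvexTopology X)]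
    intro f hf
    rw [le_principal_iff] at hf
    -- index type
    let I : Type := ({D : Set X // IsClosed D ∧ GConvex D ∧ D ⊆ C ∧ D ∈ f})ᵒᵈ
    haveI : Nonempty I := ⟨OrderDual.toDual ⟨C, hcl, hconv, subset_rfl, hf⟩⟩
    haveI : IsDirected I (· ≤ ·) := by
      constructor
      intro i j
      refine ⟨OrderDual.toDual ⟨(OrderDual.ofDual i).1 ∩ (OrderDual.ofDual j).1,
        (OrderDual.ofDual i).2.1.inter (OrderDual.ofDual j).2.1,
        (OrderDual.ofDual i).2.2.1.inter' (OrderDual.ofDual j).2.2.1,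
        (Set.inter_subset_left).trans (OrderDual.ofDual i).2.2.2.1,
        Filter.inter_mem (OrderDual.ofDual i).2.2.2.2 (OrderDual.ofDual j).2.2.2.2⟩,
        ?_, ?_⟩
      · exact Set.inter_subset_left
      · exact Set.inter_subset_right
    obtain ⟨a, ha⟩ := hRefl I (fun i => (OrderDual.ofDual i).1)
      (fun i => f.nonempty_of_mem (OrderDual.ofDual i).2.2.2.2)
      (fun i => hbdd.subset (OrderDual.ofDual i).2.2.2.1)
      (fun i => (OrderDual.ofDual i).2.1) (fun i => (OrderDual.ofDual i).2.2.1)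
      (fun i j hji => hji)
    simp only [Set.mem_iInter] at ha
    refine ⟨a, ha (OrderDual.toDual ⟨C, hcl, hconv, subset_rfl, hf⟩), ?_⟩
    rw [coConvexTopology, TopologicalSpace.nhds_generateFrom]
    refine le_iInf fun s => le_iInf fun hs => ?_
    obtain ⟨has, E, hEcl, hEconv, rfl⟩ : a ∈ s ∧ ∃ E, IsClosed E ∧ GConvex E ∧ s = Eᶜ := hs
    rw [le_principal_iff]
    by_contra hmem
    replace hmem : E ∈ f := by
      have := (Ultrafilter.compl_mem_iff_notMem (s := Eᶜ) (f := f)).mpr hmem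
      rwa [compl_compl] at this
    exact has (ha (OrderDual.toDual ⟨E ∩ C, hEcl.inter hcl, hEconv.inter' hconv,
      Set.inter_subset_right, Filter.inter_mem hmem hf⟩)).1
end

section
/- Let (X,d) be a complete uniformly ∞-convex metric space and let (x_n) be a bounded sequence in X. Then the function x ↦ ω(x,(x_n)) = limsup_{n→∞} d(x,x_n) has a unique minimizer (the asymptotic center of (x_n)). -/
open Filter Topology Metric Set MeasureTheory
open scoped ENNReal

/-- In a complete uniformly `∞`-convex space, every bounded sequence has a
unique asymptotic center. -/
theorem asymptotic_center_exists_unique (X : Type) [MetricSpace X] [CompleteSpace X]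
    (h : UniformlyInftyConvex X) (x : ℕ → X) (hb : Bornology.IsBounded (Set.range x)) :
    ∃! a : X, ∀ z : X, asymRadius x a ≤ asymRadius x z := by
  classical
  obtain ⟨hmid, huc⟩ := h
  have hXne : Nonempty X := ⟨x 0⟩
  set ω : X → ℝ := asymRadius x with hωdef
  obtain ⟨C, hC⟩ := Metric.isBounded_range_iff.mp hb
  have hbdd : ∀ z : X, Filter.IsBoundedUnder (· ≤ ·) atTop (fun n => dist z (x n)) := by
    intro z
    refine Filter.isBoundedUnder_of ⟨dist z (x 0) + C, fun n => ?_⟩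
    have := dist_triangle z (x 0) (x n)
    have := hC 0 n
    linarith
  have hcob : ∀ z : X, Filter.IsCoboundedUnder (· ≤ ·) atTop (fun n => dist z (x n)) := by
    intro z
    have : Filter.IsBoundedUnder (· ≥ ·) atTop (fun n => dist z (x n)) :=
      Filter.isBoundedUnder_of ⟨0, fun n => dist_nonneg⟩
    exact this.isCoboundedUnder_le
  have hnonneg : ∀ z : X, 0 ≤ ω z := fun z =>
    Filter.le_limsup_of_frequently_le (Filter.Frequently.of_forall fun n => dist_nonneg) (hbdd z)
  have hbb : BddBelow (Set.range ω) := ⟨0, by rintro _ ⟨z, rfl⟩; exact hnonneg z⟩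
  set rs : ℝ := ⨅ z, ω z with hrsdef
  have hrs_le : ∀ z : X, rs ≤ ω z := fun z => ciInf_le hbb z
  have hrs_nonneg : 0 ≤ rs := le_ciInf hnonneg
  have hev : ∀ (z : X) (r : ℝ), ω z < r → ∀ᶠ n in atTop, dist z (x n) < r := fun z r hz =>
    Filter.eventually_lt_of_limsup_lt hz (hbdd z)
  have hle : ∀ (z : X) (r : ℝ), (∀ᶠ n in atTop, dist z (x n) ≤ r) → ω z ≤ r := fun z r hz =>
    Filter.limsup_le_of_le (hcob z) hz
  -- Lipschitz bound
  have hlip : ∀ z z' : X, ω z' ≤ ω z + dist z z' := by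
    intro z z'
    refine le_of_forall_pos_le_add fun η hη => ?_
    refine hle z' _ ?_
    filter_upwards [hev z (ω z + η) (by linarith)] with n hn
    have := dist_triangle z' z (x n)
    have : dist z' (x n) ≤ dist z z' + dist z (x n) := by
      rw [dist_comm z z']; exact this
    linarith
  -- triangle bound
  have htri : ∀ z z' : X, dist z z' ≤ ω z + ω z' := by
    intro z z'
    refine le_of_forall_pos_le_add fun η hη => ?_
    have h1 := hev z (ω z + η / 2) (by linarith)
    have h2 := hev z' (ω z' + η / 2) (by linarith)
    obtain ⟨n, hn1, hn2⟩ := (h1.and h2).exists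
    have := dist_triangle z (x n) z'
    rw [dist_comm (x n) z'] at this
    linarith
  -- key convexity estimate
  have key : ∀ ε : ℝ, 0 < ε → ∃ ρ ∈ Set.Ioo (0:ℝ) 1,
      ∀ (z z' : X) (r : ℝ), ω z < r → ω z' < r → ε * r ≤ dist z z' → rs ≤ (1 - ρ) * r := by
    intro ε hε
    obtain ⟨ρ, hρ, hconv⟩ := huc ε hε
    refine ⟨ρ, hρ, fun z z' r hz hz' hd => ?_⟩
    obtain ⟨m, hm⟩ := hmid z z'
    have hevm : ∀ᶠ n in atTop, dist m (x n) ≤ (1 - ρ) * r := by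
      filter_upwards [hev z r hz, hev z' r hz'] with n h1 h2
      have hM : max (dist z (x n)) (dist z' (x n)) < r := max_lt h1 h2
      have hMnn : 0 ≤ max (dist z (x n)) (dist z' (x n)) :=
        le_max_of_le_left dist_nonneg
      have hcond : ε * max (dist z (x n)) (dist z' (x n)) < dist z z' :=
        lt_of_lt_of_le (by nlinarith) hd
      have h3 := hconv z z' (x n) m hm hcond
      have h1ρ : 0 < 1 - ρ := by linarith [hρ.2]
      nlinarith
    exact le_trans (hrs_le m) (hle m _ hevm)
  -- closeness lemma
  have lemD : ∀ δ : ℝ, 0 < δ → ∃ r : ℝ, rs < r ∧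
      ∀ z z' : X, ω z < r → ω z' < r → dist z z' < δ := by
    intro δ hδ
    rcases eq_or_lt_of_le hrs_nonneg with h0 | h0
    · refine ⟨rs + δ / 3, by linarith, fun z z' hz hz' => ?_⟩
      have := htri z z'
      have h1 := hrs_le z
      have h2 := hrs_le z'
      linarith
    · have hε : 0 < δ / (rs + 1) := div_pos hδ (by linarith)
      obtain ⟨ρ, hρ, hkey⟩ := key _ hε
      have h1ρ : 0 < 1 - ρ := by linarith [hρ.2]
      have hquot : (1 - ρ) * (rs / (1 - ρ)) = rs := mul_div_cancel₀ rs (ne_of_gt h1ρ)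
      have hgt : rs < rs / (1 - ρ) := by nlinarith [hρ.1]
      refine ⟨min (rs + 1) ((rs + rs / (1 - ρ)) / 2), ?_, ?_⟩
      · exact lt_min (by linarith) (by linarith)
      · intro z z' hz hz'
        by_contra hcon
        push_neg at hcon
        set r := min (rs + 1) ((rs + rs / (1 - ρ)) / 2) with hrdef
        have hr1 : r ≤ rs + 1 := min_le_left _ _
        have hr2 : r ≤ (rs + rs / (1 - ρ)) / 2 := min_le_right _ _
        have hεr : δ / (rs + 1) * r ≤ dist z z' := by
          have : δ / (rs + 1) * r ≤ δ / (rs + 1) * (rs + 1) := by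
            apply mul_le_mul_of_nonneg_left hr1 (le_of_lt hε)
          rw [div_mul_cancel₀ δ (by positivity : (rs:ℝ) + 1 ≠ 0)] at this
          linarith
        have := hkey z z' r hz hz' hεr
        nlinarith
  -- minimizing sequence
  have hmin : ∀ r : ℝ, rs < r → ∃ z : X, ω z < r := fun r hr => exists_lt_of_ciInf_lt hr
  have hseq : ∀ k : ℕ, ∃ z : X, ω z < rs + 1 / (k + 1) := by
    intro k
    apply hmin
    have : (0:ℝ) < 1 / ((k:ℝ) + 1) := by positivity
    linarith
  choose z hz using hseq
  have hcauchy : CauchySeq z := by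
    rw [Metric.cauchySeq_iff]
    intro δ hδ
    obtain ⟨r, hr, hprop⟩ := lemD δ hδ
    obtain ⟨N, hN⟩ := exists_nat_one_div_lt (show (0:ℝ) < r - rs by linarith)
    refine ⟨N, fun k hk l hl => ?_⟩
    have hzk : ω (z k) < r := by
      have h1 : (1:ℝ) / (k + 1) ≤ 1 / (N + 1) := by
        apply one_div_le_one_div_of_le (by positivity)
        exact_mod_cast by omega
      have := hz k
      linarith
    have hzl : ω (z l) < r := by
      have h1 : (1:ℝ) / (l + 1) ≤ 1 / (N + 1) := by
        apply one_div_le_one_div_of_le (by positivity)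
        exact_mod_cast by omega
      have := hz l
      linarith
    exact hprop _ _ hzk hzl
  obtain ⟨a, ha⟩ := cauchySeq_tendsto_of_complete hcauchy
  have hωa : ω a ≤ rs := by
    refine le_of_forall_pos_le_add fun η hη => ?_
    obtain ⟨N, hN⟩ := exists_nat_one_div_lt (show (0:ℝ) < η / 2 by linarith)
    obtain ⟨N', hN'⟩ := Metric.tendsto_atTop.mp ha (η / 2) (by linarith)
    set k := N + N' with hkdef
    have hdk : dist (z k) a < η / 2 := hN' k (Nat.le_add_left _ _)
    have hk : N ≤ k := Nat.le_add_right _ _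
    have h1 : (1:ℝ) / (k + 1) ≤ 1 / (N + 1) := by
      apply one_div_le_one_div_of_le (by positivity)
      exact_mod_cast by omega
    have h2 := hlip (z k) a
    rw [dist_comm (z k) a] at hdk
    have := hz k
    rw [dist_comm] at h2
    linarith
  have hamin : ∀ w : X, ω a ≤ ω w := fun w => le_trans hωa (hrs_le w)
  refine ⟨a, hamin, fun b hbmin => ?_⟩
  by_contra hne
  have hδ : 0 < dist b a := dist_pos.mpr hne
  obtain ⟨r, hr, hprop⟩ := lemD _ hδ
  have hb1 : ω b < r := lt_of_le_of_lt (le_trans (hbmin a) hωa) hr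
  have ha1 : ω a < r := lt_of_le_of_lt hωa hr
  exact absurd (hprop b a hb1 ha1) (lt_irrefl _)
end
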